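/- arXiv:2207.06123 — 12 statements merged into one kernel-verified Lean document; each statement's English description precedes it below -/
import Mathlib

section
/- Let A be a bounded linear projection on a Hilbert space H (i.e., A² = A). Then A is Hermitian (A = A*) if and only if A = A A* A. -/
open ContinuousLinearMap

/-- `X` is the Moore-Penrose inverse of `A`: the four Penrose equations. -/
def IsMPInv {H₁ H₂ : Type*} [NormedAddCommGroup H₁] [InnerProductSpace ℂ H₁]
    [NormedAddCommGroup H₂] [InnerProductSpace ℂ H₂] [CompleteSpace H₁] [CompleteSpace H₂]
    (A : H₁ →L[ℂ] H₂) (X : H₂ →L[ℂ] H₁) : Prop :=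
  A ∘L X ∘L A = A ∧ X ∘L A ∘L X = X ∧
    ContinuousLinearMap.adjoint (A ∘L X) = A ∘L X ∧
    ContinuousLinearMap.adjoint (X ∘L A) = X ∘L A

/-!
With `a² = a` and `a a⋆ a = a`, the element `n = a - a a⋆` satisfies `n n⋆ = 0`, so `n = 0` by
the C⋆-identity. Hence `a = a a⋆`, which is self-adjoint.
-/

lemma sub_mul_star_mul_star_eq_zero_of_isIdempotentElem {R : Type*} [NonUnitalRing R]
    [StarRing R] {a : R} (ha : IsIdempotentElem a) (h : a * star a * a = a) :
    (a - a * star a) * star (a - a * star a) = 0 := by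
  have hs : star a * star a = star a := ha.star
  have ha' : a * a = a := ha
  calc (a - a * star a) * star (a - a * star a)
      = a * star a - a * a * star a - a * (star a * star a) + (a * star a * a) * star a := by
        simp only [star_sub, star_mul, star_star]; noncomm_ring
    _ = 0 := by rw [ha', hs, h, sub_self, zero_sub, neg_add_cancel]

theorem star_eq_self_iff_of_isIdempotentElem {R : Type*} [NonUnitalNormedRing R] [StarRing R]
    [CStarRing R] {a : R} (ha : IsIdempotentElem a) :
    star a = a ↔ a * star a * a = a := by
  constructor
  · intro h
    rw [h, ha.eq, ha.eq]
  · intro h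
    have ha_eq : a = a * star a :=
      sub_eq_zero.mp <| (CStarRing.mul_star_self_eq_zero_iff _).mp <|
        sub_mul_star_mul_star_eq_zero_of_isIdempotentElem ha h
    rw [ha_eq, star_mul, star_star]

theorem stmt0 {H : Type*} [NormedAddCommGroup H] [InnerProductSpace ℂ H] [CompleteSpace H]
    (A : H →L[ℂ] H) (hA : A ∘L A = A) :
    ContinuousLinearMap.adjoint A = A ↔ A = A ∘L ContinuousLinearMap.adjoint A ∘L A := by
  have hA' : IsIdempotentElem A := hA
  rw [← star_eq_adjoint, star_eq_self_iff_of_isIdempotentElem hA', eq_comm]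
  rfl
end

section
/- Let A be a positive semi-definite bounded operator on a Hilbert space H such that Aᵐ = Aⁿ for some natural numbers m ≠ n (both at least 1). Then A² = A. -/
/-!
A positive operator `A` has nonnegative real spectrum, and by the continuous functional calculus
`A ^ m = A ^ n` forces `x ^ m = x ^ n` on that spectrum. For `m ≠ n` a nonnegative real with this
property is `0` or `1`, so `x ^ 2 = x` on the spectrum and hence `A ^ 2 = A`.
-/

open ContinuousLinearMap

theorem sq_eq_self_of_pow_eq_pow_of_nonneg {M₀ : Type*} [MonoidWithZero M₀] [LinearOrder M₀]
    [PosMulStrictMono M₀] [ZeroLEOneClass M₀] {x : M₀} (hx : 0 ≤ x) {m n : ℕ} (hmn : m ≠ n)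
    (h : x ^ m = x ^ n) : x ^ 2 = x := by
  rcases hx.eq_or_lt with rfl | hx0
  · simp
  by_cases hx1 : x = 1
  · simp [hx1]
  exact absurd (pow_right_injective₀ hx0 hx1 h) hmn

open scoped ComplexOrder in
theorem ContinuousLinearMap.isPositive_iff_inner_nonneg_complex {E : Type*}
    [NormedAddCommGroup E] [InnerProductSpace ℂ E] (T : E →L[ℂ] E) :
    T.IsPositive ↔ ∀ x, 0 ≤ inner ℂ (T x) x := by
  simp only [isPositive_iff_complex, Complex.nonneg_iff, Complex.ext_iff, Complex.ofReal_re,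
    Complex.ofReal_im, true_and, RCLike.re_to_complex]
  exact forall_congr' fun x => by rw [eq_comm, and_comm]

theorem CFC.sq_eq_self_of_nonneg_of_pow_eq_pow {A : Type*} [Ring A] [StarRing A] [PartialOrder A]
    [StarOrderedRing A] [TopologicalSpace A] [Algebra ℝ A]
    [ContinuousFunctionalCalculus ℝ A IsSelfAdjoint] [NonnegSpectrumClass ℝ A] {a : A}
    (ha : 0 ≤ a) {m n : ℕ} (hmn : m ≠ n) (h : a ^ m = a ^ n) : a ^ 2 = a := by
  have hsa : IsSelfAdjoint a := .of_nonneg ha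
  have hpow : (spectrum ℝ a).EqOn (· ^ m) (· ^ n) :=
    eqOn_of_cfc_eq_cfc (by rw [cfc_pow_id a m, cfc_pow_id a n, h])
  have hspec : (spectrum ℝ a).EqOn (· ^ 2) id := fun x hx =>
    sq_eq_self_of_pow_eq_pow_of_nonneg (spectrum_nonneg_of_nonneg ha hx) hmn (hpow hx)
  calc a ^ 2 = cfc (fun x : ℝ => x ^ 2) a := (cfc_pow_id a 2).symm
    _ = cfc id a := cfc_congr hspec
    _ = a := cfc_id ℝ a

open scoped ComplexOrder in
theorem stmt1_general {H : Type*} [NormedAddCommGroup H] [InnerProductSpace ℂ H] [CompleteSpace H]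
    (A : H →L[ℂ] H)
    (hpos : ∀ x : H, 0 ≤ (inner ℂ (A x) x : ℂ))
    (m n : ℕ) (hmn : m ≠ n) (h : A ^ m = A ^ n) :
    A ^ 2 = A :=
  CFC.sq_eq_self_of_nonneg_of_pow_eq_pow
    ((nonneg_iff_isPositive A).mpr ((isPositive_iff_inner_nonneg_complex A).mpr hpos)) hmn h

open scoped ComplexOrder in
theorem stmt1 {H : Type*} [NormedAddCommGroup H] [InnerProductSpace ℂ H] [CompleteSpace H]
    (A : H →L[ℂ] H)
    (hpos : ∀ x : H, 0 ≤ (inner ℂ (A x) x : ℂ))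
    (m n : ℕ) (hm : 1 ≤ m) (hn : 1 ≤ n) (hmn : m ≠ n) (h : A ^ m = A ^ n) :
    A ^ 2 = A :=
  stmt1_general A hpos m n hmn h
end

section
/- Let A and B be orthogonal projections on a Hilbert space H and m > n ≥ 1 natural numbers. If (ABA)ᵐ = (ABA)ⁿ, then AB = BA. -/
open ContinuousLinearMap

/-! `T = ABA = (BA)⋆(BA)` is positive, and `Tᵐ = Tⁿ` forces its spectrum into `{0, 1}`, so `T` is
a projection. Then `(BA - T)⋆(BA - T) = T - T² = 0`, hence `BA = T` is self-adjoint and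
`AB = (BA)⋆ = BA`. -/

theorem eq_zero_or_eq_one_of_pow_eq_pow {M₀ : Type*} [MonoidWithZero M₀] [LinearOrder M₀]
    [PosMulStrictMono M₀] [ZeroLEOneClass M₀] {a : M₀} {m n : ℕ} (ha : 0 ≤ a) (hmn : m ≠ n)
    (h : a ^ m = a ^ n) : a = 0 ∨ a = 1 := by
  refine or_iff_not_imp_left.2 fun ha₀ ↦ by_contra fun ha₁ ↦ hmn ?_
  exact (pow_right_inj₀ (ha.lt_of_ne' ha₀) ha₁).1 h

theorem IsIdempotentElem.of_nonneg_of_pow_eq_pow {A : Type*} [Ring A] [StarRing A]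
    [PartialOrder A] [StarOrderedRing A] [Algebra ℝ A] [TopologicalSpace A]
    [ContinuousFunctionalCalculus ℝ A IsSelfAdjoint] [NonnegSpectrumClass ℝ A] {a : A}
    (ha : 0 ≤ a) {m n : ℕ} (hmn : m ≠ n) (h : a ^ m = a ^ n) : IsIdempotentElem a := by
  rw [isIdempotentElem_iff_spectrum_subset ℝ a (.of_nonneg ha)]
  intro x hx
  have hpow : (spectrum ℝ a).EqOn (· ^ m) (· ^ n) := by
    rw [← cfc_eq_cfc_iff_eqOn, cfc_pow_id a m, cfc_pow_id a n, h]
  exact eq_zero_or_eq_one_of_pow_eq_pow (spectrum_nonneg_of_nonneg ha hx) hmn (hpow hx)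

theorem IsStarProjection.commute_of_isIdempotentElem_mul_mul {E : Type*}
    [NonUnitalNormedRing E] [StarRing E] [CStarRing E] {p q : E}
    (hp : IsStarProjection p) (hq : IsStarProjection q) (h : IsIdempotentElem (p * q * p)) :
    Commute p q := by
  set t := p * q * p with ht
  have hts : star t = t := by
    simp only [ht, star_mul, hp.isSelfAdjoint.star_eq, hq.isSelfAdjoint.star_eq, mul_assoc]
  have key : star (q * p - t) * (q * p - t) = t - t * t := by
    have e1 : p * q * (q * p) = t := by
      rw [ht, mul_assoc, ← mul_assoc q q p, hq.isIdempotentElem.eq, ← mul_assoc]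
    have e2 : p * q * t = t * t := by
      simp only [ht, mul_assoc, hp.isIdempotentElem.mul_self_mul]
    have e3 : t * (q * p) = t * t := by
      simp only [ht, mul_assoc, hp.isIdempotentElem.mul_self_mul]
    rw [star_sub, star_mul, hp.isSelfAdjoint.star_eq, hq.isSelfAdjoint.star_eq, hts]
    calc (p * q - t) * (q * p - t) = p * q * (q * p) - p * q * t - t * (q * p) + t * t := by
          noncomm_ring
      _ = t - t * t := by rw [e1, e2, e3]; abel
  have hqp : q * p = t := by
    rwa [h.eq, sub_self, CStarRing.star_mul_self_eq_zero_iff, sub_eq_zero] at key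
  calc p * q = star (q * p) := by
        rw [star_mul, hp.isSelfAdjoint.star_eq, hq.isSelfAdjoint.star_eq]
    _ = q * p := by rw [hqp, hts]

theorem stmt2_general {H : Type*} [NormedAddCommGroup H] [InnerProductSpace ℂ H] [CompleteSpace H]
    (A B : H →L[ℂ] H)
    (hA : A ∘L A = A) (hA' : ContinuousLinearMap.adjoint A = A)
    (hB : B ∘L B = B) (hB' : ContinuousLinearMap.adjoint B = B)
    (m n : ℕ) (hmn : n < m)
    (h : (A ∘L B ∘L A) ^ m = (A ∘L B ∘L A) ^ n) :
    A ∘L B = B ∘L A := by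
  have hAp : IsStarProjection A := ⟨hA, by rw [IsSelfAdjoint, star_eq_adjoint, hA']⟩
  have hBp : IsStarProjection B := ⟨hB, by rw [IsSelfAdjoint, star_eq_adjoint, hB']⟩
  have hABA : 0 ≤ A * B * A := hAp.isSelfAdjoint.conjugate_nonneg hBp.nonneg
  have hidem : IsIdempotentElem (A * B * A) :=
    .of_nonneg_of_pow_eq_pow hABA hmn.ne' (by rw [mul_assoc]; exact h)
  exact (hAp.commute_of_isIdempotentElem_mul_mul hBp hidem).eq

theorem stmt2 {H : Type*} [NormedAddCommGroup H] [InnerProductSpace ℂ H] [CompleteSpace H]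
    (A B : H →L[ℂ] H)
    (hA : A ∘L A = A) (hA' : ContinuousLinearMap.adjoint A = A)
    (hB : B ∘L B = B) (hB' : ContinuousLinearMap.adjoint B = B)
    (m n : ℕ) (hn : 1 ≤ n) (hmn : n < m)
    (h : (A ∘L B ∘L A) ^ m = (A ∘L B ∘L A) ^ n) :
    A ∘L B = B ∘L A :=
  stmt2_general A B hA hA' hB hB' m n hmn h
end

section
/- Let A and B be orthogonal projections on a Hilbert space H and m > n ≥ 1 natural numbers. If (AB)ᵐ = (AB)ⁿ, then AB = BA. -/
open ContinuousLinearMap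

/-!
The compression `C = ABA` is positive and satisfies `C^(k+1) = (AB)^(k+1) A`, so `(AB)^m = (AB)^n`
gives `C^(m+1) = C^(n+1)`. A nonnegative real `x` with `x^(m+1) = x^(n+1)` is `0` or `1`, hence
`C` is a projection by the spectral theorem. Finally
`(AB - ABA)(AB - ABA)* = ABA - (ABA)²` for any two projections, so `AB = ABA` is self-adjoint,
i.e. `AB = (AB)* = BA`.
-/

lemma eq_zero_or_eq_one_of_pow_eq_pow_s3 {R : Type*} [Semifield R] [LinearOrder R]
    [IsStrictOrderedRing R] {x : R} {m n : ℕ} (hx : 0 ≤ x) (hmn : m ≠ n) (h : x ^ m = x ^ n) :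
    x = 0 ∨ x = 1 := by
  by_contra! hx01
  exact hmn ((pow_right_inj₀ (hx.lt_of_ne' hx01.1) hx01.2).mp h)

lemma isIdempotentElem_of_nonneg_of_pow_eq_pow {𝒜 : Type*} [CStarAlgebra 𝒜] [PartialOrder 𝒜]
    [StarOrderedRing 𝒜] {a : 𝒜} {m n : ℕ} (ha : 0 ≤ a) (hmn : m ≠ n) (h : a ^ m = a ^ n) :
    IsIdempotentElem a := by
  rw [isIdempotentElem_iff_spectrum_subset ℝ a ha.isSelfAdjoint]
  intro x hx
  have hpow : x ^ m = x ^ n := by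
    rw [← cfc_pow_id (R := ℝ) a m, ← cfc_pow_id (R := ℝ) a n, cfc_eq_cfc_iff_eqOn] at h
    exact h hx
  exact eq_zero_or_eq_one_of_pow_eq_pow_s3 (spectrum_nonneg_of_nonneg ha hx) hmn hpow

lemma IsIdempotentElem.mul_pow_succ_mul_self {M : Type*} [Monoid M] {p : M}
    (hp : IsIdempotentElem p) (q : M) (k : ℕ) :
    (p * q) ^ (k + 1) * p = (p * q * p) ^ (k + 1) := by
  induction k with
  | zero => simp
  | succ k ih =>
    calc (p * q) ^ (k + 1 + 1) * p = (p * q) ^ (k + 1) * (p * p) * q * p := by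
          rw [hp.eq, pow_succ _ (k + 1)]; simp only [mul_assoc]
      _ = (p * q * p) ^ (k + 1 + 1) := by
          rw [pow_succ _ (k + 1), ← ih]; simp only [mul_assoc]

namespace IsStarProjection

lemma mul_sub_mul_mul_mul_star {R : Type*} [NonUnitalRing R] [StarRing R] {p q : R}
    (hp : IsStarProjection p) (hq : IsStarProjection q) :
    (p * q - p * q * p) * star (p * q - p * q * p) = p * q * p - p * q * p * (p * q * p) := by
  have hp2 : p * p = p := hp.isIdempotentElem
  have hq2 : q * q = q := hq.isIdempotentElem
  rw [star_sub, star_mul, star_mul, star_mul, hp.isSelfAdjoint.star_eq, hq.isSelfAdjoint.star_eq]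
  have hsq : p * q * p * (p * q * p) = p * q * p * q * p := by
    rw [show p * q * p * (p * q * p) = p * q * (p * p) * q * p by noncomm_ring, hp2]
  calc (p * q - p * q * p) * (q * p - p * (q * p))
      = p * (q * q) * p - 2 • (p * q * p * q * p) + p * q * (p * p) * q * p := by noncomm_ring
    _ = p * q * p - p * q * p * (p * q * p) := by rw [hp2, hq2, hsq]; noncomm_ring

lemma commute_of_isIdempotentElem_mul_mul_s3 {R : Type*} [NonUnitalNormedRing R] [StarRing R]
    [CStarRing R] {p q : R} (hp : IsStarProjection p) (hq : IsStarProjection q)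
    (h : IsIdempotentElem (p * q * p)) : Commute p q := by
  have hpq : p * q = p * q * p := by
    rw [← sub_eq_zero, ← CStarRing.mul_star_self_eq_zero_iff, mul_sub_mul_mul_mul_star hp hq,
      h.eq, sub_self]
  have hsa : star (p * q) = p * q :=
    (hpq ▸ hq.isSelfAdjoint.conjugate_self hp.isSelfAdjoint : IsSelfAdjoint (p * q)).star_eq
  rw [star_mul, hp.isSelfAdjoint.star_eq, hq.isSelfAdjoint.star_eq] at hsa
  exact hsa.symm

lemma commute_of_mul_pow_eq_mul_pow {𝒜 : Type*} [CStarAlgebra 𝒜] [PartialOrder 𝒜]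
    [StarOrderedRing 𝒜] {p q : 𝒜} (hp : IsStarProjection p) (hq : IsStarProjection q)
    {m n : ℕ} (hmn : m ≠ n) (h : (p * q) ^ m = (p * q) ^ n) : Commute p q := by
  have hsucc : (p * q * p) ^ (m + 1) = (p * q * p) ^ (n + 1) := by
    rw [← hp.isIdempotentElem.mul_pow_succ_mul_self, ← hp.isIdempotentElem.mul_pow_succ_mul_self,
      pow_succ, pow_succ, h]
  have hnonneg : 0 ≤ p * q * p := IsSelfAdjoint.conjugate_nonneg hq.nonneg hp.isSelfAdjoint
  exact hp.commute_of_isIdempotentElem_mul_mul_s3 hq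
    (isIdempotentElem_of_nonneg_of_pow_eq_pow hnonneg (by omega) hsucc)

end IsStarProjection

theorem stmt3_general {H : Type*} [NormedAddCommGroup H] [InnerProductSpace ℂ H] [CompleteSpace H]
    (A B : H →L[ℂ] H)
    (hA : A ∘L A = A) (hA' : ContinuousLinearMap.adjoint A = A)
    (hB : B ∘L B = B) (hB' : ContinuousLinearMap.adjoint B = B)
    (m n : ℕ) (hmn : n < m)
    (h : (A ∘L B) ^ m = (A ∘L B) ^ n) :
    A ∘L B = B ∘L A :=
  IsStarProjection.commute_of_mul_pow_eq_mul_pow ⟨hA, by rw [IsSelfAdjoint, star_eq_adjoint, hA']⟩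
    ⟨hB, by rw [IsSelfAdjoint, star_eq_adjoint, hB']⟩ hmn.ne' h

theorem stmt3 {H : Type*} [NormedAddCommGroup H] [InnerProductSpace ℂ H] [CompleteSpace H]
    (A B : H →L[ℂ] H)
    (hA : A ∘L A = A) (hA' : ContinuousLinearMap.adjoint A = A)
    (hB : B ∘L B = B) (hB' : ContinuousLinearMap.adjoint B = B)
    (m n : ℕ) (hn : 1 ≤ n) (hmn : n < m)
    (h : (A ∘L B) ^ m = (A ∘L B) ^ n) :
    A ∘L B = B ∘L A :=
  stmt3_general A B hA hA' hB hB' m n hmn h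
end

section
/- Let A ∈ B(H₂, H₃) and B ∈ B(H₁, H₂) have closed ranges and suppose AB has closed range. Then A B B† A† A B = A B if and only if B† A† A B B† A† = B† A†. -/
/-! With `M = A B` and `X = B† A†`, the Penrose equations for `A` and `B` give the factorizations
`X = B† B†* M* A†* A†` and `X M X = B† B†* (M* X* M*) A†* A†`. So `M X M = M`, read through the
adjoint as `M* X* M* = M*`, forces `X M X = X`. The converse is the same statement for the pair
`(B†, A†)`, whose Moore-Penrose inverses are `B` and `A`. -/

open ContinuousLinearMap

namespace IsMPInv

variable {H₁ H₂ H₃ : Type*}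
  [NormedAddCommGroup H₁] [InnerProductSpace ℂ H₁] [CompleteSpace H₁]
  [NormedAddCommGroup H₂] [InnerProductSpace ℂ H₂] [CompleteSpace H₂]
  [NormedAddCommGroup H₃] [InnerProductSpace ℂ H₃] [CompleteSpace H₃]

theorem symm {A : H₁ →L[ℂ] H₂} {X : H₂ →L[ℂ] H₁} (h : IsMPInv A X) : IsMPInv X A :=
  ⟨h.2.1, h.1, h.2.2.2, h.2.2.1⟩

theorem adjoint_comp_adjoint {A : H₁ →L[ℂ] H₂} {X : H₂ →L[ℂ] H₁} (h : IsMPInv A X) :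
    adjoint X ∘L adjoint A = A ∘L X := by
  rw [← adjoint_comp, h.2.2.1]

theorem comp_adjoint_comp_adjoint {A : H₁ →L[ℂ] H₂} {X : H₂ →L[ℂ] H₁} (h : IsMPInv A X) :
    X ∘L adjoint X ∘L adjoint A = X := by
  rw [h.adjoint_comp_adjoint, h.2.1]

theorem adjoint_comp_adjoint_comp {A : H₁ →L[ℂ] H₂} {X : H₂ →L[ℂ] H₁} (h : IsMPInv A X) :
    adjoint A ∘L adjoint X ∘L X = X := by
  rw [← comp_assoc, h.symm.adjoint_comp_adjoint, comp_assoc, h.2.1]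

theorem reverse_order_outer_of_inner {A : H₂ →L[ℂ] H₃} {B : H₁ →L[ℂ] H₂}
    {Ad : H₃ →L[ℂ] H₂} {Bd : H₂ →L[ℂ] H₁} (hA : IsMPInv A Ad) (hB : IsMPInv B Bd)
    (h : A ∘L B ∘L Bd ∘L Ad ∘L A ∘L B = A ∘L B) :
    Bd ∘L Ad ∘L A ∘L B ∘L Bd ∘L Ad = Bd ∘L Ad := by
  have h_adj : adjoint B ∘L adjoint A ∘L adjoint Ad ∘L adjoint Bd ∘L adjoint B ∘L adjoint A =
      adjoint B ∘L adjoint A := by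
    simpa only [adjoint_comp, comp_assoc] using congrArg adjoint h
  calc Bd ∘L Ad ∘L A ∘L B ∘L Bd ∘L Ad
      = (Bd ∘L adjoint Bd ∘L adjoint B) ∘L (Ad ∘L A) ∘L (B ∘L Bd) ∘L
          (adjoint A ∘L adjoint Ad ∘L Ad) := by
        rw [hB.comp_adjoint_comp_adjoint, hA.adjoint_comp_adjoint_comp]
        simp only [comp_assoc]
    _ = Bd ∘L adjoint Bd ∘L (adjoint B ∘L adjoint A ∘L adjoint Ad ∘L adjoint Bd ∘L
          adjoint B ∘L adjoint A) ∘L adjoint Ad ∘L Ad := by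
        rw [← hA.symm.adjoint_comp_adjoint, ← hB.adjoint_comp_adjoint]
        simp only [comp_assoc]
    _ = (Bd ∘L adjoint Bd ∘L adjoint B) ∘L (adjoint A ∘L adjoint Ad ∘L Ad) := by
        rw [h_adj]
        simp only [comp_assoc]
    _ = Bd ∘L Ad := by
        rw [hB.comp_adjoint_comp_adjoint, hA.adjoint_comp_adjoint_comp]

end IsMPInv

theorem stmt5_general {H₁ H₂ H₃ : Type*}
    [NormedAddCommGroup H₁] [InnerProductSpace ℂ H₁] [CompleteSpace H₁]
    [NormedAddCommGroup H₂] [InnerProductSpace ℂ H₂] [CompleteSpace H₂]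
    [NormedAddCommGroup H₃] [InnerProductSpace ℂ H₃] [CompleteSpace H₃]
    (A : H₂ →L[ℂ] H₃) (B : H₁ →L[ℂ] H₂)
    (Ad : H₃ →L[ℂ] H₂) (Bd : H₂ →L[ℂ] H₁)
    (hA : IsMPInv A Ad) (hB : IsMPInv B Bd) :
    A ∘L B ∘L Bd ∘L Ad ∘L A ∘L B = A ∘L B ↔
      Bd ∘L Ad ∘L A ∘L B ∘L Bd ∘L Ad = Bd ∘L Ad :=
  ⟨hA.reverse_order_outer_of_inner hB, hB.symm.reverse_order_outer_of_inner hA.symm⟩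

theorem stmt5 {H₁ H₂ H₃ : Type*}
    [NormedAddCommGroup H₁] [InnerProductSpace ℂ H₁] [CompleteSpace H₁]
    [NormedAddCommGroup H₂] [InnerProductSpace ℂ H₂] [CompleteSpace H₂]
    [NormedAddCommGroup H₃] [InnerProductSpace ℂ H₃] [CompleteSpace H₃]
    (A : H₂ →L[ℂ] H₃) (B : H₁ →L[ℂ] H₂)
    (Ad : H₃ →L[ℂ] H₂) (Bd : H₂ →L[ℂ] H₁) (ABd : H₃ →L[ℂ] H₁)
    (hAcl : IsClosed (LinearMap.range (A : H₂ →ₗ[ℂ] H₃) : Set H₃))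
    (hBcl : IsClosed (LinearMap.range (B : H₁ →ₗ[ℂ] H₂) : Set H₂))
    (hABcl : IsClosed (LinearMap.range ((A ∘L B : H₁ →L[ℂ] H₃) : H₁ →ₗ[ℂ] H₃) : Set H₃))
    (hA : IsMPInv A Ad) (hB : IsMPInv B Bd) (hAB : IsMPInv (A ∘L B) ABd) :
    A ∘L B ∘L Bd ∘L Ad ∘L A ∘L B = A ∘L B ↔
      Bd ∘L Ad ∘L A ∘L B ∘L Bd ∘L Ad = Bd ∘L Ad :=
  stmt5_general A B Ad Bd hA hB
end

section
/- Let A ∈ B(H₂, H₃) and B ∈ B(H₁, H₂) have closed ranges and suppose AB has closed range. Then A B B† A† A B = A B if and only if A† A B B† = B B† A† A. -/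
open ContinuousLinearMap

/-!
Write `P = A†A` and `Q = BB†`; both are orthogonal projections. Multiplying `ABB†A†AB = AB` by `A†`
on the left and `B†` on the right shows that `PQ` is idempotent, and for orthogonal projections in a
C⋆-algebra this forces `P` and `Q` to commute: `T = PQ - PQP` satisfies `T T⋆ = PQP - PQPQP = 0`,
so `PQ = PQP` is self-adjoint. Conversely, if `P` and `Q` commute then
`A(QP)B = A(PQ)B = (AA†A)(BB†B) = AB`.
-/

theorem IsStarProjection.commute_of_isIdempotentElem_mul {E : Type*} [NonUnitalNormedRing E]
    [StarRing E] [CStarRing E] {p q : E} (hp : IsStarProjection p) (hq : IsStarProjection q)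
    (hpq : IsIdempotentElem (p * q)) : Commute p q := by
  have hstar : star (p * q) = q * p := by
    rw [star_mul, hp.isSelfAdjoint.star_eq, hq.isSelfAdjoint.star_eq]
  have hpp : ∀ x, p * (p * x) = p * x := fun x => by rw [← mul_assoc, hp.isIdempotentElem.eq]
  have hqq : ∀ x, q * (q * x) = q * x := fun x => by rw [← mul_assoc, hq.isIdempotentElem.eq]
  have hpqpq : ∀ x, p * (q * (p * (q * x))) = p * (q * x) := fun x => by
    simpa only [mul_assoc] using congrArg (· * x) hpq.eq
  have hpqp : p * q = p * q * p := by
    rw [← sub_eq_zero, ← CStarRing.mul_star_self_eq_zero_iff, star_sub, hstar, star_mul, hstar,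
      hp.isSelfAdjoint.star_eq]
    simp only [mul_sub, sub_mul, mul_assoc, hpp, hqq, hpqpq, sub_self]
  calc p * q = p * q * p := hpqp
    _ = star (p * q * p) := by rw [star_mul, hstar, hp.isSelfAdjoint.star_eq, mul_assoc]
    _ = q * p := by rw [← hpqp, hstar]

section

variable {H₁ H₂ : Type*} [NormedAddCommGroup H₁] [InnerProductSpace ℂ H₁] [CompleteSpace H₁]
  [NormedAddCommGroup H₂] [InnerProductSpace ℂ H₂] [CompleteSpace H₂]
  {A : H₁ →L[ℂ] H₂} {X : H₂ →L[ℂ] H₁}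

theorem IsMPInv.isStarProjection_comp_left (h : IsMPInv A X) : IsStarProjection (X ∘L A) where
  isIdempotentElem := by
    rw [IsIdempotentElem, mul_def, comp_assoc, h.1]
  isSelfAdjoint := by rw [IsSelfAdjoint, star_eq_adjoint, h.2.2.2]

theorem IsMPInv.isStarProjection_comp_right (h : IsMPInv A X) : IsStarProjection (A ∘L X) where
  isIdempotentElem := by
    rw [IsIdempotentElem, mul_def, comp_assoc, h.2.1]
  isSelfAdjoint := by rw [IsSelfAdjoint, star_eq_adjoint, h.2.2.1]

end

theorem stmt6_general {H₁ H₂ H₃ : Type*}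
    [NormedAddCommGroup H₁] [InnerProductSpace ℂ H₁] [CompleteSpace H₁]
    [NormedAddCommGroup H₂] [InnerProductSpace ℂ H₂] [CompleteSpace H₂]
    [NormedAddCommGroup H₃] [InnerProductSpace ℂ H₃] [CompleteSpace H₃]
    (A : H₂ →L[ℂ] H₃) (B : H₁ →L[ℂ] H₂)
    (Ad : H₃ →L[ℂ] H₂) (Bd : H₂ →L[ℂ] H₁)
    (hA : IsMPInv A Ad) (hB : IsMPInv B Bd) :
    A ∘L B ∘L Bd ∘L Ad ∘L A ∘L B = A ∘L B ↔
      Ad ∘L A ∘L B ∘L Bd = B ∘L Bd ∘L Ad ∘L A := by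
  constructor
  · intro h
    have hidem : IsIdempotentElem ((Ad ∘L A) * (B ∘L Bd)) := by
      simpa only [IsIdempotentElem, mul_def, comp_assoc] using congrArg (Ad ∘L · ∘L Bd) h
    simpa only [mul_def, comp_assoc] using
      (hA.isStarProjection_comp_left.commute_of_isIdempotentElem_mul
        hB.isStarProjection_comp_right hidem).eq
  · intro h
    calc A ∘L B ∘L Bd ∘L Ad ∘L A ∘L B
        = A ∘L (B ∘L Bd ∘L Ad ∘L A) ∘L B := by simp only [comp_assoc]
      _ = A ∘L (Ad ∘L A ∘L B ∘L Bd) ∘L B := by rw [h]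
      _ = (A ∘L Ad ∘L A) ∘L (B ∘L Bd ∘L B) := by simp only [comp_assoc]
      _ = A ∘L B := by rw [hA.1, hB.1]

theorem stmt6 {H₁ H₂ H₃ : Type*}
    [NormedAddCommGroup H₁] [InnerProductSpace ℂ H₁] [CompleteSpace H₁]
    [NormedAddCommGroup H₂] [InnerProductSpace ℂ H₂] [CompleteSpace H₂]
    [NormedAddCommGroup H₃] [InnerProductSpace ℂ H₃] [CompleteSpace H₃]
    (A : H₂ →L[ℂ] H₃) (B : H₁ →L[ℂ] H₂)
    (Ad : H₃ →L[ℂ] H₂) (Bd : H₂ →L[ℂ] H₁) (ABd : H₃ →L[ℂ] H₁)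
    (hAcl : IsClosed (LinearMap.range (A : H₂ →ₗ[ℂ] H₃) : Set H₃))
    (hBcl : IsClosed (LinearMap.range (B : H₁ →ₗ[ℂ] H₂) : Set H₂))
    (hABcl : IsClosed (LinearMap.range (A ∘L B : H₁ →ₗ[ℂ] H₃) : Set H₃))
    (hA : IsMPInv A Ad) (hB : IsMPInv B Bd) (hAB : IsMPInv (A ∘L B) ABd) :
    A ∘L B ∘L Bd ∘L Ad ∘L A ∘L B = A ∘L B ↔
      Ad ∘L A ∘L B ∘L Bd = B ∘L Bd ∘L Ad ∘L A :=
  stmt6_general A B Ad Bd hA hB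
end

section
/- Let A ∈ B(H₂, H₃) and B ∈ B(H₁, H₂) have closed ranges and suppose AB has closed range. If B B† A† A is an idempotent (i.e., (BB†A†A)² = BB†A†A), then A† A B B† = B B† A† A. -/
open ContinuousLinearMap

/-!
`BB†` and `A†A` are orthogonal projections `p`, `q`. If `pq` is idempotent, then
`x = pq - qpq` satisfies `x⋆x = 0`, so `pq = qpq` is self-adjoint and equals its adjoint `qp`.
-/

namespace IsStarProjection

variable {R : Type*} [NonUnitalNormedRing R] [StarRing R] [CStarRing R] {p q : R}

theorem commute_of_isIdempotentElem_mul_s7 (hp : IsStarProjection p) (hq : IsStarProjection q)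
    (hpq : IsIdempotentElem (p * q)) : Commute p q := by
  have hp' : ∀ x, p * (p * x) = p * x := fun x => by rw [← mul_assoc, hp.isIdempotentElem.eq]
  have hq' : ∀ x, q * (q * x) = q * x := fun x => by rw [← mul_assoc, hq.isIdempotentElem.eq]
  have hpq' : p * (q * (p * q)) = p * q := by simpa only [mul_assoc] using hpq.eq
  have hzero : star (p * q - q * (p * q)) * (p * q - q * (p * q)) = 0 := by
    simp only [star_sub, star_mul, hp.isSelfAdjoint.star_eq, hq.isSelfAdjoint.star_eq, sub_mul,
      mul_sub, mul_assoc, hp', hq', hpq', sub_self]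
  have hpq_eq : p * q = q * (p * q) :=
    sub_eq_zero.mp ((CStarRing.star_mul_self_eq_zero_iff _).mp hzero)
  calc p * q = q * (p * q) := hpq_eq
    _ = star (q * (p * q)) := by
      simp only [star_mul, hp.isSelfAdjoint.star_eq, hq.isSelfAdjoint.star_eq, mul_assoc]
    _ = star (p * q) := by rw [← hpq_eq]
    _ = q * p := by simp only [star_mul, hp.isSelfAdjoint.star_eq, hq.isSelfAdjoint.star_eq]

end IsStarProjection

section

variable {H₁ H₂ : Type*} [NormedAddCommGroup H₁] [InnerProductSpace ℂ H₁] [CompleteSpace H₁]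
  [NormedAddCommGroup H₂] [InnerProductSpace ℂ H₂] [CompleteSpace H₂]
  {A : H₁ →L[ℂ] H₂} {X : H₂ →L[ℂ] H₁}

theorem IsMPInv.isStarProjection_comp_inv (hX : IsMPInv A X) : IsStarProjection (A ∘L X) := by
  obtain ⟨-, hXAX, hAX, -⟩ := hX
  refine ⟨?_, by rw [IsSelfAdjoint, star_eq_adjoint, hAX]⟩
  show A ∘L (X ∘L A ∘L X) = A ∘L X
  rw [hXAX]

theorem IsMPInv.isStarProjection_inv_comp (hX : IsMPInv A X) : IsStarProjection (X ∘L A) := by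
  obtain ⟨hAXA, -, -, hXA⟩ := hX
  refine ⟨?_, by rw [IsSelfAdjoint, star_eq_adjoint, hXA]⟩
  show X ∘L (A ∘L X ∘L A) = X ∘L A
  rw [hAXA]

end

theorem stmt7_general {H₁ H₂ H₃ : Type*}
    [NormedAddCommGroup H₁] [InnerProductSpace ℂ H₁] [CompleteSpace H₁]
    [NormedAddCommGroup H₂] [InnerProductSpace ℂ H₂] [CompleteSpace H₂]
    [NormedAddCommGroup H₃] [InnerProductSpace ℂ H₃] [CompleteSpace H₃]
    (A : H₂ →L[ℂ] H₃) (B : H₁ →L[ℂ] H₂)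
    (Ad : H₃ →L[ℂ] H₂) (Bd : H₂ →L[ℂ] H₁)
    (hA : IsMPInv A Ad) (hB : IsMPInv B Bd)
    (h : (B ∘L Bd ∘L Ad ∘L A) ∘L (B ∘L Bd ∘L Ad ∘L A) = B ∘L Bd ∘L Ad ∘L A) :
    Ad ∘L A ∘L B ∘L Bd = B ∘L Bd ∘L Ad ∘L A :=
  (hB.isStarProjection_comp_inv.commute_of_isIdempotentElem_mul_s7
    hA.isStarProjection_inv_comp h).eq.symm

theorem stmt7 {H₁ H₂ H₃ : Type*}
    [NormedAddCommGroup H₁] [InnerProductSpace ℂ H₁] [CompleteSpace H₁]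
    [NormedAddCommGroup H₂] [InnerProductSpace ℂ H₂] [CompleteSpace H₂]
    [NormedAddCommGroup H₃] [InnerProductSpace ℂ H₃] [CompleteSpace H₃]
    (A : H₂ →L[ℂ] H₃) (B : H₁ →L[ℂ] H₂)
    (Ad : H₃ →L[ℂ] H₂) (Bd : H₂ →L[ℂ] H₁) (ABd : H₃ →L[ℂ] H₁)
    (hAcl : IsClosed (LinearMap.range (A : H₂ →ₗ[ℂ] H₃) : Set H₃))
    (hBcl : IsClosed (LinearMap.range (B : H₁ →ₗ[ℂ] H₂) : Set H₂))
    (hABcl : IsClosed (LinearMap.range (A ∘L B : H₁ →ₗ[ℂ] H₃) : Set H₃))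
    (hA : IsMPInv A Ad) (hB : IsMPInv B Bd) (hAB : IsMPInv (A ∘L B) ABd)
    (h : (B ∘L Bd ∘L Ad ∘L A) ∘L (B ∘L Bd ∘L Ad ∘L A) = B ∘L Bd ∘L Ad ∘L A) :
    Ad ∘L A ∘L B ∘L Bd = B ∘L Bd ∘L Ad ∘L A :=
  stmt7_general A B Ad Bd hA hB h
end

section
/- Let A ∈ B(H₂, H₃) and B ∈ B(H₁, H₂) have closed ranges and suppose AB has closed range. Then AB(AB)† = A B B† A† if and only if B B† A* A B = A* A B. -/
/-!
Write `P = A B B† A†` and `E = B B†`. Since `P = (A B) (B† A†)`, the projection `AB (AB)†` onto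
`ran (AB)` equals `P` exactly when `P` is self-adjoint and fixes `A B`.

If `P = AB (AB)†`, then `A* A B = A* P A B = (A† A) E A* A B`; a vector fixed by a product of two
orthogonal projections is fixed by each of them, so `E A* A B = A* A B`.

Conversely, `E A* A B = A* A B` forces `E` to commute with `A* A`, and then
`P* = (A†)* E A* A A† = (A†)* A* A E A† = P` and `P A B = P* A B = (A†)* A* A B = A B`.
-/

open ContinuousLinearMap

theorem IsSelfAdjoint.commute_of_mul_mul_eq_mul {R : Type*} [Monoid R] [StarMul R] {e x : R}
    (he : IsSelfAdjoint e) (hx : IsSelfAdjoint x) (h : e * x * e = x * e) : Commute e x := by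
  have h' : e * x * e = e * x := by
    simpa only [star_mul, he.star_eq, hx.star_eq, mul_assoc] using congrArg star h
  exact h'.symm.trans h

theorem IsStarProjection.apply_eq_self_of_apply_apply_eq {𝕜 E : Type*} [RCLike 𝕜]
    [NormedAddCommGroup E] [InnerProductSpace 𝕜 E] [CompleteSpace E] {p q : E →L[𝕜] E}
    (hp : IsStarProjection p) (hq : IsStarProjection q) {u : E} (h : p (q u) = u) :
    q u = u := by
  obtain ⟨K, _, rfl⟩ := isStarProjection_iff_eq_starProjection.mp hp
  obtain ⟨L, _, rfl⟩ := isStarProjection_iff_eq_starProjection.mp hq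
  have hnorm : ‖L.starProjection u‖ = ‖u‖ :=
    le_antisymm (L.norm_starProjection_apply_le u)
      (calc ‖u‖ = ‖K.starProjection (L.starProjection u)‖ := by rw [h]
        _ ≤ ‖L.starProjection u‖ := K.norm_starProjection_apply_le _)
  exact L.starProjection_eq_self_iff.mpr ((L.mem_iff_norm_starProjection u).mpr hnorm)

namespace IsMPInv

section

variable {H K : Type*} [NormedAddCommGroup H] [InnerProductSpace ℂ H] [CompleteSpace H]
  [NormedAddCommGroup K] [InnerProductSpace ℂ K] [CompleteSpace K]
  {A : H →L[ℂ] K} {X : K →L[ℂ] H}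

theorem isStarProjection_comp_inv_s9 (h : IsMPInv A X) : IsStarProjection (A ∘L X) :=
  ⟨by rw [IsIdempotentElem, mul_def, ← comp_assoc, comp_assoc A, h.1],
    isSelfAdjoint_iff'.mpr h.2.2.1⟩

theorem isStarProjection_inv_comp_s9 (h : IsMPInv A X) : IsStarProjection (X ∘L A) :=
  ⟨by rw [IsIdempotentElem, mul_def, ← comp_assoc, comp_assoc X, h.2.1],
    isSelfAdjoint_iff'.mpr h.2.2.2⟩

theorem adjoint_comp_comp_inv (h : IsMPInv A X) : adjoint A ∘L A ∘L X = adjoint A := by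
  conv_rhs => rw [← h.1, ← comp_assoc, adjoint_comp, h.2.2.1]

theorem adjoint_inv_comp_adjoint_comp_comp {G : Type*} [NormedAddCommGroup G] [NormedSpace ℂ G]
    (h : IsMPInv A X) (T : G →L[ℂ] H) : adjoint X ∘L adjoint A ∘L A ∘L T = A ∘L T := by
  rw [← comp_assoc, ← adjoint_comp, h.2.2.1, ← comp_assoc, comp_assoc A X A, h.1]

theorem comp_inv_eq_of_adjoint_eq (h : IsMPInv A X) {P : K →L[ℂ] K} {N : K →L[ℂ] H}
    (hP : adjoint P = P) (hPA : P ∘L A = A) (hN : P = A ∘L N) : A ∘L X = P :=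
  calc A ∘L X = adjoint (P ∘L A ∘L X) := by rw [← comp_assoc, hPA, h.2.2.1]
    _ = A ∘L X ∘L P := by rw [adjoint_comp, hP, h.2.2.1, comp_assoc]
    _ = P := by rw [hN, ← comp_assoc X, ← comp_assoc, h.1]

end

variable {H₁ H₂ H₃ : Type*}
  [NormedAddCommGroup H₁] [InnerProductSpace ℂ H₁] [CompleteSpace H₁]
  [NormedAddCommGroup H₂] [InnerProductSpace ℂ H₂] [CompleteSpace H₂]
  [NormedAddCommGroup H₃] [InnerProductSpace ℂ H₃] [CompleteSpace H₃]
  {A : H₂ →L[ℂ] H₃} {B : H₁ →L[ℂ] H₂} {Ad : H₃ →L[ℂ] H₂} {Bd : H₂ →L[ℂ] H₁}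

theorem adjoint_comp_comp_inv_comp (hB : IsMPInv B Bd) :
    adjoint (A ∘L B ∘L Bd ∘L Ad) = adjoint Ad ∘L B ∘L Bd ∘L adjoint A := by
  rw [← comp_assoc B, ← comp_assoc, adjoint_comp, adjoint_comp,
    isSelfAdjoint_iff'.mp hB.isStarProjection_comp_inv_s9.isSelfAdjoint, comp_assoc]

theorem comp_inv_comp_adjoint_comp_comp_eq_of_adjoint_eq (hA : IsMPInv A Ad) (hB : IsMPInv B Bd)
    (hP : adjoint (A ∘L B ∘L Bd ∘L Ad) = A ∘L B ∘L Bd ∘L Ad)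
    (hPAB : (A ∘L B ∘L Bd ∘L Ad) ∘L (A ∘L B) = A ∘L B) :
    B ∘L Bd ∘L adjoint A ∘L A ∘L B = adjoint A ∘L A ∘L B := by
  have hfix : (Ad ∘L A) ∘L (B ∘L Bd) ∘L (adjoint A ∘L A ∘L B) = adjoint A ∘L A ∘L B :=
    calc (Ad ∘L A) ∘L (B ∘L Bd) ∘L (adjoint A ∘L A ∘L B)
        = adjoint A ∘L adjoint (A ∘L B ∘L Bd ∘L Ad) ∘L (A ∘L B) := by
          rw [hB.adjoint_comp_comp_inv_comp, ← hA.2.2.2, adjoint_comp]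
          simp only [comp_assoc]
      _ = adjoint A ∘L A ∘L B := by rw [hP, hPAB]
  ext x
  exact hA.isStarProjection_inv_comp_s9.apply_eq_self_of_apply_apply_eq
    hB.isStarProjection_comp_inv_s9 (u := (adjoint A ∘L A ∘L B) x) (DFunLike.congr_fun hfix x)

theorem adjoint_comp_comp_inv_comp_inv_of_commute (hA : IsMPInv A Ad) (hB : IsMPInv B Bd)
    (hEX : Commute (B ∘L Bd) (adjoint A ∘L A)) :
    adjoint (A ∘L B ∘L Bd ∘L Ad) = A ∘L B ∘L Bd ∘L Ad :=
  calc adjoint (A ∘L B ∘L Bd ∘L Ad)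
      = adjoint Ad ∘L ((B ∘L Bd) * (adjoint A ∘L A)) ∘L Ad := by
        rw [hB.adjoint_comp_comp_inv_comp]
        conv_lhs => rw [← hA.adjoint_comp_comp_inv]
        simp only [mul_def, comp_assoc]
    _ = A ∘L B ∘L Bd ∘L Ad := by
        rw [hEX.eq, mul_def]
        simp only [comp_assoc]
        exact hA.adjoint_inv_comp_adjoint_comp_comp _

end IsMPInv

theorem stmt9_general {H₁ H₂ H₃ : Type*}
    [NormedAddCommGroup H₁] [InnerProductSpace ℂ H₁] [CompleteSpace H₁]
    [NormedAddCommGroup H₂] [InnerProductSpace ℂ H₂] [CompleteSpace H₂]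
    [NormedAddCommGroup H₃] [InnerProductSpace ℂ H₃] [CompleteSpace H₃]
    (A : H₂ →L[ℂ] H₃) (B : H₁ →L[ℂ] H₂)
    (Ad : H₃ →L[ℂ] H₂) (Bd : H₂ →L[ℂ] H₁) (ABd : H₃ →L[ℂ] H₁)
    (hA : IsMPInv A Ad) (hB : IsMPInv B Bd) (hAB : IsMPInv (A ∘L B) ABd) :
    (A ∘L B) ∘L ABd = A ∘L B ∘L Bd ∘L Ad ↔
      B ∘L Bd ∘L ContinuousLinearMap.adjoint A ∘L A ∘L B = ContinuousLinearMap.adjoint A ∘L A ∘L B := by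
  constructor
  · intro h
    refine hA.comp_inv_comp_adjoint_comp_comp_eq_of_adjoint_eq hB (h ▸ hAB.2.2.1) ?_
    rw [← h, comp_assoc, hAB.1]
  · intro h
    have hEX : Commute (B ∘L Bd) (adjoint A ∘L A) := by
      refine hB.isStarProjection_comp_inv_s9.isSelfAdjoint.commute_of_mul_mul_eq_mul
        (isPositive_adjoint_comp_self A).isSelfAdjoint ?_
      simpa only [mul_def, comp_assoc] using congrArg (· ∘L Bd) h
    have hP := hA.adjoint_comp_comp_inv_comp_inv_of_commute hB hEX
    have hPAB : (A ∘L B ∘L Bd ∘L Ad) ∘L (A ∘L B) = A ∘L B := by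
      rw [← hP, hB.adjoint_comp_comp_inv_comp]
      simp only [comp_assoc]
      rw [h, hA.adjoint_inv_comp_adjoint_comp_comp]
    exact hAB.comp_inv_eq_of_adjoint_eq hP hPAB (N := Bd ∘L Ad) (by simp only [comp_assoc])

theorem stmt9 {H₁ H₂ H₃ : Type*}
    [NormedAddCommGroup H₁] [InnerProductSpace ℂ H₁] [CompleteSpace H₁]
    [NormedAddCommGroup H₂] [InnerProductSpace ℂ H₂] [CompleteSpace H₂]
    [NormedAddCommGroup H₃] [InnerProductSpace ℂ H₃] [CompleteSpace H₃]
    (A : H₂ →L[ℂ] H₃) (B : H₁ →L[ℂ] H₂)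
    (Ad : H₃ →L[ℂ] H₂) (Bd : H₂ →L[ℂ] H₁) (ABd : H₃ →L[ℂ] H₁)
    (hAcl : IsClosed (LinearMap.range (A : H₂ →ₗ[ℂ] H₃) : Set H₃))
    (hBcl : IsClosed (LinearMap.range (B : H₁ →ₗ[ℂ] H₂) : Set H₂))
    (hABcl : IsClosed (LinearMap.range ((A ∘L B : H₁ →L[ℂ] H₃) : H₁ →ₗ[ℂ] H₃) : Set H₃))
    (hA : IsMPInv A Ad) (hB : IsMPInv B Bd) (hAB : IsMPInv (A ∘L B) ABd) :
    (A ∘L B) ∘L ABd = A ∘L B ∘L Bd ∘L Ad ↔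
      B ∘L Bd ∘L ContinuousLinearMap.adjoint A ∘L A ∘L B = ContinuousLinearMap.adjoint A ∘L A ∘L B :=
  stmt9_general A B Ad Bd ABd hA hB hAB
end

section
/- Let A ∈ B(H₂, H₃) and B ∈ B(H₁, H₂) have closed ranges and suppose AB has closed range. Then B† A† satisfies the first and third Penrose equations for AB (i.e., AB·B†A†·AB = AB and (AB·B†A†)* = AB·B†A†) if and only if AB(AB)† = A B B† A†. -/
/-! A `{1,3}`-inverse `X` of `M` (that is, `M X M = M` with `M X` self-adjoint) is determined up
to the projection `M X`: for two of them, `M D = (M X M D)* = (M D)* (M X)* = M D M X = M X`.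
Conversely, both equations only involve `X` through `M X`. Applied to `M = AB`, `D = (AB)†` and
`X = B† A†`, this is the theorem. -/

open ContinuousLinearMap

section PenroseOneThree

variable {𝕜 E F : Type*} [RCLike 𝕜]
  [NormedAddCommGroup E] [InnerProductSpace 𝕜 E]
  [NormedAddCommGroup F] [InnerProductSpace 𝕜 F] [CompleteSpace F]
  {M : E →L[𝕜] F} {D X : F →L[𝕜] E}

theorem comp_eq_comp_of_penrose_one_three
    (hD₁ : M ∘L D ∘L M = M) (hD₃ : adjoint (M ∘L D) = M ∘L D)
    (hX₁ : M ∘L X ∘L M = M) (hX₃ : adjoint (M ∘L X) = M ∘L X) :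
    M ∘L D = M ∘L X :=
  calc M ∘L D = adjoint ((M ∘L X ∘L M) ∘L D) := by rw [hX₁, hD₃]
    _ = adjoint ((M ∘L X) ∘L (M ∘L D)) := rfl
    _ = (M ∘L D ∘L M) ∘L X := by rw [adjoint_comp, hD₃, hX₃]; rfl
    _ = M ∘L X := by rw [hD₁]

theorem penrose_one_three_iff_comp_eq (hD₁ : M ∘L D ∘L M = M)
    (hD₃ : adjoint (M ∘L D) = M ∘L D) :
    (M ∘L X ∘L M = M ∧ adjoint (M ∘L X) = M ∘L X) ↔ M ∘L X = M ∘L D := by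
  constructor
  · rintro ⟨hX₁, hX₃⟩
    exact (comp_eq_comp_of_penrose_one_three hD₁ hD₃ hX₁ hX₃).symm
  · intro hXD
    have hX₁ : (M ∘L X) ∘L M = M := by rw [hXD]; exact hD₁
    exact ⟨hX₁, hXD ▸ hD₃⟩

end PenroseOneThree

theorem stmt11_general {H₁ H₂ H₃ : Type*}
    [NormedAddCommGroup H₁] [InnerProductSpace ℂ H₁] [CompleteSpace H₁]
    [NormedAddCommGroup H₂] [InnerProductSpace ℂ H₂] [CompleteSpace H₂]
    [NormedAddCommGroup H₃] [InnerProductSpace ℂ H₃] [CompleteSpace H₃]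
    (A : H₂ →L[ℂ] H₃) (B : H₁ →L[ℂ] H₂)
    (Ad : H₃ →L[ℂ] H₂) (Bd : H₂ →L[ℂ] H₁) (ABd : H₃ →L[ℂ] H₁)
    (hAB : IsMPInv (A ∘L B) ABd) :
    (A ∘L B ∘L Bd ∘L Ad ∘L A ∘L B = A ∘L B ∧
        ContinuousLinearMap.adjoint (A ∘L B ∘L Bd ∘L Ad) = A ∘L B ∘L Bd ∘L Ad) ↔
      (A ∘L B) ∘L ABd = A ∘L B ∘L Bd ∘L Ad := by
  obtain ⟨h₁, -, h₃, -⟩ := hAB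
  exact (penrose_one_three_iff_comp_eq (X := Bd ∘L Ad) h₁ h₃).trans eq_comm

theorem stmt11 {H₁ H₂ H₃ : Type*}
    [NormedAddCommGroup H₁] [InnerProductSpace ℂ H₁] [CompleteSpace H₁]
    [NormedAddCommGroup H₂] [InnerProductSpace ℂ H₂] [CompleteSpace H₂]
    [NormedAddCommGroup H₃] [InnerProductSpace ℂ H₃] [CompleteSpace H₃]
    (A : H₂ →L[ℂ] H₃) (B : H₁ →L[ℂ] H₂)
    (Ad : H₃ →L[ℂ] H₂) (Bd : H₂ →L[ℂ] H₁) (ABd : H₃ →L[ℂ] H₁)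
    (hAcl : IsClosed (LinearMap.range (A : H₂ →ₗ[ℂ] H₃) : Set H₃))
    (hBcl : IsClosed (LinearMap.range (B : H₁ →ₗ[ℂ] H₂) : Set H₂))
    (hABcl : IsClosed (LinearMap.range ((A ∘L B : H₁ →L[ℂ] H₃) : H₁ →ₗ[ℂ] H₃) : Set H₃))
    (hA : IsMPInv A Ad) (hB : IsMPInv B Bd) (hAB : IsMPInv (A ∘L B) ABd) :
    (A ∘L B ∘L Bd ∘L Ad ∘L A ∘L B = A ∘L B ∧
        ContinuousLinearMap.adjoint (A ∘L B ∘L Bd ∘L Ad) = A ∘L B ∘L Bd ∘L Ad) ↔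
      (A ∘L B) ∘L ABd = A ∘L B ∘L Bd ∘L Ad :=
  stmt11_general A B Ad Bd ABd hAB
end

section
/- Let A ∈ B(H₂, H₃) and B ∈ B(H₁, H₂) have closed ranges and suppose AB has closed range. Then B† = (AB)† A if and only if R(B) = R(A* A B). -/
open ContinuousLinearMap

section

variable {R M N P : Type*} [Semiring R]
  [TopologicalSpace M] [AddCommMonoid M] [Module R M]
  [TopologicalSpace N] [AddCommMonoid N] [Module R N]
  [TopologicalSpace P] [AddCommMonoid P] [Module R P]

theorem range_le_range_of_eq_comp {U : M →L[R] N} {S : P →L[R] N} {Y : M →L[R] P}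
    (h : U = S ∘L Y) : LinearMap.range (U : M →ₗ[R] N) ≤ LinearMap.range (S : P →ₗ[R] N) :=
  h ▸ LinearMap.range_comp_le_range (Y : M →ₗ[R] P) (S : P →ₗ[R] N)

theorem comp_eq_self_of_range_le {Q : N →L[R] N} {S : P →L[R] N} {U : M →L[R] N}
    (hQS : Q ∘L S = S)
    (h : LinearMap.range (U : M →ₗ[R] N) ≤ LinearMap.range (S : P →ₗ[R] N)) :
    Q ∘L U = U := by
  ext x
  obtain ⟨w, hw⟩ := h (LinearMap.mem_range_self (U : M →ₗ[R] N) x)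
  simp only [coe_coe] at hw
  simpa [← hw] using congr($hQS w)

end

theorem eq_zero_of_range_le_range_adjoint {E F G : Type*}
    [NormedAddCommGroup E] [NormedSpace ℂ E]
    [NormedAddCommGroup F] [InnerProductSpace ℂ F] [CompleteSpace F]
    [NormedAddCommGroup G] [InnerProductSpace ℂ G] [CompleteSpace G]
    {A : F →L[ℂ] G} {U : E →L[ℂ] F}
    (hU : LinearMap.range (U : E →ₗ[ℂ] F) ≤ LinearMap.range (adjoint A : G →ₗ[ℂ] F))
    (hAU : A ∘L U = 0) : U = 0 := by
  ext x
  obtain ⟨w, hw⟩ := hU (LinearMap.mem_range_self (U : E →ₗ[ℂ] F) x)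
  simp only [coe_coe] at hw
  have hAUx : A (U x) = 0 := congr($hAU x)
  rw [zero_apply, ← inner_self_eq_zero (𝕜 := ℂ), ← hw, adjoint_inner_left, hw, hAUx,
    inner_zero_right]

theorem adjoint_adjoint_comp {E F G : Type*}
    [NormedAddCommGroup E] [InnerProductSpace ℂ E] [CompleteSpace E]
    [NormedAddCommGroup F] [InnerProductSpace ℂ F] [CompleteSpace F]
    [NormedAddCommGroup G] [InnerProductSpace ℂ G] [CompleteSpace G]
    (A : F →L[ℂ] G) (T : E →L[ℂ] G) : adjoint (adjoint A ∘L T) = adjoint T ∘L A := by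
  rw [adjoint_comp, adjoint_adjoint]

namespace IsMPInv

variable {E F : Type*}
  [NormedAddCommGroup E] [InnerProductSpace ℂ E] [CompleteSpace E]
  [NormedAddCommGroup F] [InnerProductSpace ℂ F] [CompleteSpace F]
  {S : E →L[ℂ] F} {X Y : F →L[ℂ] E}

theorem adjoint_mpInv_comp_adjoint (h : IsMPInv S X) : adjoint X ∘L adjoint S = S ∘L X := by
  rw [← adjoint_comp, h.2.2.1]

theorem adjoint_comp_adjoint_mpInv (h : IsMPInv S X) : adjoint S ∘L adjoint X = X ∘L S := by
  rw [← adjoint_comp, h.2.2.2]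

theorem adjoint_comp_adjoint_mpInv_comp_adjoint (h : IsMPInv S X) :
    adjoint S ∘L adjoint X ∘L adjoint S = adjoint S := by
  rw [← adjoint_comp, ← adjoint_comp]
  exact congrArg adjoint h.1

theorem adjoint_comp_self_comp_mpInv (h : IsMPInv S X) :
    adjoint S ∘L S ∘L X = adjoint S := by
  rw [← h.2.2.1, ← adjoint_comp]
  exact congrArg adjoint h.1

theorem self_comp_mpInv_comp_adjoint_mpInv (h : IsMPInv S X) :
    (S ∘L X) ∘L adjoint X = adjoint X := by
  rw [← h.2.2.1, ← adjoint_comp]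
  exact congrArg adjoint h.2.1

theorem unique (hX : IsMPInv S X) (hY : IsMPInv S Y) : X = Y := by
  have hSX : S ∘L X = S ∘L Y :=
    calc S ∘L X = adjoint X ∘L adjoint S ∘L adjoint Y ∘L adjoint S := by
          rw [hY.adjoint_comp_adjoint_mpInv_comp_adjoint, hX.adjoint_mpInv_comp_adjoint]
      _ = (S ∘L X) ∘L S ∘L Y := by
          rw [hY.adjoint_mpInv_comp_adjoint, ← hX.adjoint_mpInv_comp_adjoint]; rfl
      _ = S ∘L Y := congrArg (· ∘L Y) hX.1
  have hXS : X ∘L S = Y ∘L S :=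
    calc X ∘L S = adjoint S ∘L adjoint Y ∘L adjoint S ∘L adjoint X := by
          rw [← hX.adjoint_comp_adjoint_mpInv]
          exact congrArg (· ∘L adjoint X) hY.adjoint_comp_adjoint_mpInv_comp_adjoint.symm
      _ = (Y ∘L S) ∘L X ∘L S := by
          rw [hX.adjoint_comp_adjoint_mpInv, ← hY.adjoint_comp_adjoint_mpInv]; rfl
      _ = Y ∘L S := congrArg (Y ∘L ·) hX.1
  calc X = (X ∘L S) ∘L X := hX.2.1.symm
    _ = Y ∘L S ∘L Y := by rw [hXS, comp_assoc, hSX]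
    _ = Y := hY.2.1

theorem of_comp_eq (hY : IsMPInv S Y) (h₂ : X ∘L S ∘L X = X)
    (h₄ : adjoint (X ∘L S) = X ∘L S) (hSX : S ∘L X = S ∘L Y) : IsMPInv S X := by
  refine ⟨?_, h₂, hSX ▸ hY.2.2.1, h₄⟩
  rw [← comp_assoc, hSX]
  exact hY.1

theorem comp_eq_self_iff_adjoint_comp {H : Type*} [NormedAddCommGroup H]
    [InnerProductSpace ℂ H] [CompleteSpace H] (h : IsMPInv S X) {D : H →L[ℂ] F} :
    (S ∘L X) ∘L D = D ↔ adjoint D ∘L S ∘L X = adjoint D := by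
  rw [← adjoint.injective.eq_iff, adjoint_comp, h.2.2.1]

end IsMPInv

section ReverseOrder

variable {E F G : Type*}
  [NormedAddCommGroup E] [InnerProductSpace ℂ E] [CompleteSpace E]
  [NormedAddCommGroup F] [InnerProductSpace ℂ F] [CompleteSpace F]
  [NormedAddCommGroup G] [InnerProductSpace ℂ G] [CompleteSpace G]
  {A : F →L[ℂ] G} {B : E →L[ℂ] F} {Bd : F →L[ℂ] E} {ABd : G →L[ℂ] E}

theorem range_eq_of_mpInv_eq_mpInv_comp (hB : IsMPInv B Bd) (hAB : IsMPInv (A ∘L B) ABd)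
    (h : Bd = ABd ∘L A) :
    LinearMap.range (B : E →ₗ[ℂ] F) =
      LinearMap.range ((adjoint A ∘L A ∘L B : E →L[ℂ] F) : E →ₗ[ℂ] F) := by
  apply le_antisymm
  · apply range_le_range_of_eq_comp (Y := ABd ∘L adjoint ABd ∘L adjoint B ∘L B)
    calc B = (adjoint Bd ∘L adjoint B) ∘L B := by
          rw [hB.adjoint_mpInv_comp_adjoint]; exact hB.1.symm
      _ = adjoint A ∘L adjoint ABd ∘L adjoint B ∘L B := by rw [h, adjoint_comp]; rfl
      _ = adjoint A ∘L (((A ∘L B) ∘L ABd) ∘L adjoint ABd) ∘L adjoint B ∘L B := by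
          rw [hAB.self_comp_mpInv_comp_adjoint_mpInv]
  · apply range_le_range_of_eq_comp (Y := Bd ∘L adjoint A ∘L A ∘L B)
    refine (hB.comp_eq_self_iff_adjoint_comp.mpr ?_).symm
    rw [adjoint_adjoint_comp, h]
    exact congrArg (· ∘L A) hAB.adjoint_comp_self_comp_mpInv

theorem mpInv_eq_mpInv_comp_of_range_eq (hB : IsMPInv B Bd) (hAB : IsMPInv (A ∘L B) ABd)
    (h : LinearMap.range (B : E →ₗ[ℂ] F) =
      LinearMap.range ((adjoint A ∘L A ∘L B : E →L[ℂ] F) : E →ₗ[ℂ] F)) :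
    Bd = ABd ∘L A := by
  have hfix : (adjoint (A ∘L B) ∘L A) ∘L B ∘L Bd = adjoint (A ∘L B) ∘L A := by
    rw [← adjoint_adjoint_comp, ← hB.comp_eq_self_iff_adjoint_comp]
    exact comp_eq_self_of_range_le hB.1 h.ge
  have hT : (A ∘L B) ∘L Bd = ((A ∘L B) ∘L ABd) ∘L A :=
    calc (A ∘L B) ∘L Bd = (((A ∘L B) ∘L ABd) ∘L A ∘L B) ∘L Bd :=
          congrArg (· ∘L Bd) hAB.1.symm
      _ = adjoint ABd ∘L (adjoint (A ∘L B) ∘L A) ∘L B ∘L Bd := by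
          rw [← hAB.adjoint_mpInv_comp_adjoint]; rfl
      _ = ((A ∘L B) ∘L ABd) ∘L A := by
          rw [hfix, ← comp_assoc, hAB.adjoint_mpInv_comp_adjoint]
  have hBX : B ∘L ABd ∘L A = B ∘L Bd := by
    rw [eq_comm, ← sub_eq_zero, ← comp_sub]
    refine eq_zero_of_range_le_range_adjoint (A := A) ?_ ?_
    · exact (range_le_range_of_eq_comp rfl).trans (h.le.trans (range_le_range_of_eq_comp rfl))
    · rw [← comp_assoc, comp_sub, sub_eq_zero]
      exact hT
  exact hB.unique (hB.of_comp_eq (congrArg (· ∘L A) hAB.2.1) hAB.2.2.2 hBX)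

end ReverseOrder

theorem stmt14_general {H₁ H₂ H₃ : Type*}
    [NormedAddCommGroup H₁] [InnerProductSpace ℂ H₁] [CompleteSpace H₁]
    [NormedAddCommGroup H₂] [InnerProductSpace ℂ H₂] [CompleteSpace H₂]
    [NormedAddCommGroup H₃] [InnerProductSpace ℂ H₃] [CompleteSpace H₃]
    (A : H₂ →L[ℂ] H₃) (B : H₁ →L[ℂ] H₂)
    (Bd : H₂ →L[ℂ] H₁) (ABd : H₃ →L[ℂ] H₁)
    (hB : IsMPInv B Bd) (hAB : IsMPInv (A ∘L B) ABd) :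
    Bd = ABd ∘L A ↔ LinearMap.range (B : H₁ →ₗ[ℂ] H₂) = LinearMap.range ((ContinuousLinearMap.adjoint A ∘L A ∘L B : H₁ →L[ℂ] H₂) : H₁ →ₗ[ℂ] H₂) :=
  ⟨range_eq_of_mpInv_eq_mpInv_comp hB hAB, mpInv_eq_mpInv_comp_of_range_eq hB hAB⟩

theorem stmt14 {H₁ H₂ H₃ : Type*}
    [NormedAddCommGroup H₁] [InnerProductSpace ℂ H₁] [CompleteSpace H₁]
    [NormedAddCommGroup H₂] [InnerProductSpace ℂ H₂] [CompleteSpace H₂]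
    [NormedAddCommGroup H₃] [InnerProductSpace ℂ H₃] [CompleteSpace H₃]
    (A : H₂ →L[ℂ] H₃) (B : H₁ →L[ℂ] H₂)
    (Ad : H₃ →L[ℂ] H₂) (Bd : H₂ →L[ℂ] H₁) (ABd : H₃ →L[ℂ] H₁)
    (hAcl : IsClosed (LinearMap.range (A : H₂ →ₗ[ℂ] H₃) : Set H₃))
    (hBcl : IsClosed (LinearMap.range (B : H₁ →ₗ[ℂ] H₂) : Set H₂))
    (hABcl : IsClosed (LinearMap.range ((A ∘L B : H₁ →L[ℂ] H₃) : H₁ →ₗ[ℂ] H₃) : Set H₃))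
    (hA : IsMPInv A Ad) (hB : IsMPInv B Bd) (hAB : IsMPInv (A ∘L B) ABd) :
    Bd = ABd ∘L A ↔ LinearMap.range (B : H₁ →ₗ[ℂ] H₂) = LinearMap.range ((ContinuousLinearMap.adjoint A ∘L A ∘L B : H₁ →L[ℂ] H₂) : H₁ →ₗ[ℂ] H₂) :=
  stmt14_general A B Bd ABd hB hAB
end

section
/- Let A ∈ B(H₂, H₃) and B ∈ B(H₁, H₂) have closed ranges and suppose AB has closed range. Then (AB)† = (A† A B)† A† if and only if R(A A* A B) = R(AB). -/
/-!
Write `†` for the Moore-Penrose inverse (`Ad`, `X`, `ABd` below) and `*` for the adjoint.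
With `C = A†AB` and `T = AB C† A†`, the candidate `C† A†` always satisfies three of the four
Penrose equations for `AB`, so by uniqueness of the Moore-Penrose inverse the reverse order
law holds iff the idempotent `T`, whose range is `R(AB)`, is self-adjoint.

Put `S = (A†)* A†` and `F = A A*`. Both `F S` and `S F` equal the projection `A A†`, which fixes
`R(AB)`, and `S T = T* S` always. If `T = T*`, then `T` commutes with `S`, hence with `F`, so
both map `R(AB)` into itself and therefore `F R(AB) = R(AB)`, which is `R(A A* A B) = R(AB)`.
Conversely, if `F R(AB) = R(AB)` then `S R(AB) = R(AB)`; since `T* S T = S T`, the operator `T*`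
fixes `R(AB) = R(T)`, so `T = T* T` is self-adjoint.
-/

open ContinuousLinearMap

namespace Submodule

variable {R M : Type*} [Semiring R] [AddCommMonoid M] [Module R M] {V : Submodule R M}
  {F G : M →ₗ[R] M}

theorem map_eq_self_of_map_le (hFG : ∀ v ∈ V, F (G v) = v) (hF : V.map F ≤ V)
    (hG : V.map G ≤ V) : V.map F = V :=
  le_antisymm hF fun v hv => ⟨G v, hG ⟨v, hv, rfl⟩, hFG v hv⟩

theorem map_eq_self_of_map_eq_self (hGF : ∀ v ∈ V, G (F v) = v) (hF : V.map F = V) :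
    V.map G = V := by
  refine le_antisymm ?_ fun v hv => ⟨F v, hF ▸ mem_map_of_mem hv, hGF v hv⟩
  rintro _ ⟨_, hw, rfl⟩
  rw [← hF] at hw
  obtain ⟨v, hv, rfl⟩ := hw
  rwa [hGF v hv]

end Submodule

theorem LinearMap.map_range_le_of_comp_comm {R M : Type*} [Semiring R] [AddCommMonoid M]
    [Module R M] {K T : M →ₗ[R] M} (h : K ∘ₗ T = T ∘ₗ K) :
    (range T).map K ≤ range T := by
  rw [← range_comp, h]
  exact range_comp_le_range K T

theorem ContinuousLinearMap.adjoint_eq_self_of_adjoint_comp_self {E : Type*}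
    [NormedAddCommGroup E] [InnerProductSpace ℂ E] [CompleteSpace E] {T : E →L[ℂ] E}
    (h : adjoint T ∘L T = T) : adjoint T = T := by
  calc adjoint T = adjoint (adjoint T ∘L T) := by rw [h]
    _ = T := by rw [adjoint_comp, adjoint_adjoint, h]

section

variable {E F : Type*} [NormedAddCommGroup E] [InnerProductSpace ℂ E] [CompleteSpace E]
  [NormedAddCommGroup F] [InnerProductSpace ℂ F] [CompleteSpace F]

theorem IsMPInv.unique_s16 {A : E →L[ℂ] F} {X Y : F →L[ℂ] E} (hX : IsMPInv A X)
    (hY : IsMPInv A Y) : X = Y := by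
  obtain ⟨hX₁, hX₂, hX₃, hX₄⟩ := hX
  obtain ⟨hY₁, hY₂, hY₃, hY₄⟩ := hY
  have hAX : A ∘L X = A ∘L Y := calc
    A ∘L X = adjoint ((A ∘L Y ∘L A) ∘L X) := by rw [hY₁, hX₃]
    _ = adjoint (A ∘L X) ∘L adjoint (A ∘L Y) := by simp only [← adjoint_comp, comp_assoc]
    _ = A ∘L Y := by rw [hX₃, hY₃, ← comp_assoc, comp_assoc A, hX₁]
  have hXA : X ∘L A = Y ∘L A := calc
    X ∘L A = adjoint (X ∘L A ∘L Y ∘L A) := by rw [hY₁, hX₄]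
    _ = adjoint (Y ∘L A) ∘L adjoint (X ∘L A) := by simp only [← adjoint_comp, comp_assoc]
    _ = Y ∘L A := by rw [hX₄, hY₄, comp_assoc, hX₁]
  calc X = X ∘L A ∘L X := hX₂.symm
    _ = Y ∘L A ∘L Y := by rw [hAX, ← comp_assoc, hXA, comp_assoc]
    _ = Y := hY₂

end

section ReverseOrder

variable {H₁ H₂ H₃ : Type*}
  [NormedAddCommGroup H₁] [InnerProductSpace ℂ H₁] [CompleteSpace H₁]
  [NormedAddCommGroup H₂] [InnerProductSpace ℂ H₂] [CompleteSpace H₂]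
  [NormedAddCommGroup H₃] [InnerProductSpace ℂ H₃] [CompleteSpace H₃]
  {A : H₂ →L[ℂ] H₃} {Ad : H₃ →L[ℂ] H₂}

theorem IsMPInv.comp_adjoint_comp_adjoint_comp (hA : IsMPInv A Ad) :
    A ∘L adjoint A ∘L adjoint Ad ∘L Ad = A ∘L Ad := by
  calc A ∘L adjoint A ∘L adjoint Ad ∘L Ad = A ∘L adjoint (Ad ∘L A) ∘L Ad := by
        rw [adjoint_comp]; rfl
    _ = A ∘L Ad := by rw [hA.2.2.2]; exact congrArg (· ∘L Ad) hA.1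

theorem IsMPInv.adjoint_comp_comp_comp_adjoint (hA : IsMPInv A Ad) :
    adjoint Ad ∘L Ad ∘L A ∘L adjoint A = A ∘L Ad := by
  simpa [adjoint_comp, hA.2.2.1, comp_assoc] using
    congrArg adjoint hA.comp_adjoint_comp_adjoint_comp

variable {B : H₁ →L[ℂ] H₂} {X : H₂ →L[ℂ] H₁}

theorem IsMPInv.comp_comp_reverseOrder_comp (hA : IsMPInv A Ad)
    (hX : IsMPInv (Ad ∘L A ∘L B) X) :
    (A ∘L B) ∘L (X ∘L Ad) ∘L (A ∘L B) = A ∘L B :=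
  calc (A ∘L B) ∘L (X ∘L Ad) ∘L (A ∘L B)
        = (A ∘L Ad ∘L A) ∘L B ∘L X ∘L Ad ∘L A ∘L B := by rw [hA.1]; rfl
    _ = A ∘L (Ad ∘L A ∘L B) ∘L X ∘L (Ad ∘L A ∘L B) := rfl
    _ = A ∘L B := by rw [hX.1]; exact congrArg (· ∘L B) hA.1

theorem IsMPInv.reverseOrder_iff (hA : IsMPInv A Ad) (hX : IsMPInv (Ad ∘L A ∘L B) X) :
    IsMPInv (A ∘L B) (X ∘L Ad) ↔
      adjoint ((A ∘L B) ∘L X ∘L Ad) = (A ∘L B) ∘L X ∘L Ad :=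
  ⟨fun h => h.2.2.1, fun h =>
    ⟨hA.comp_comp_reverseOrder_comp hX, congrArg (· ∘L Ad) hX.2.1, h, hX.2.2.2⟩⟩

theorem IsMPInv.comp_reverseOrder_idem (hA : IsMPInv A Ad)
    (hX : IsMPInv (Ad ∘L A ∘L B) X) :
    ((A ∘L B) ∘L X ∘L Ad) ∘L ((A ∘L B) ∘L X ∘L Ad) = (A ∘L B) ∘L X ∘L Ad :=
  congrArg (· ∘L X ∘L Ad) (hA.comp_comp_reverseOrder_comp hX)

theorem IsMPInv.range_comp_reverseOrder (hA : IsMPInv A Ad)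
    (hX : IsMPInv (Ad ∘L A ∘L B) X) :
    LinearMap.range ((A ∘L B) ∘L X ∘L Ad : H₃ →ₗ[ℂ] H₃) =
      LinearMap.range (A ∘L B : H₁ →ₗ[ℂ] H₃) := by
  refine le_antisymm (LinearMap.range_comp_le_range (X ∘L Ad : H₃ →ₗ[ℂ] H₁)
    (A ∘L B : H₁ →ₗ[ℂ] H₃)) ?_
  conv_lhs => rw [← hA.comp_comp_reverseOrder_comp hX]
  exact LinearMap.range_comp_le_range (A ∘L B : H₁ →ₗ[ℂ] H₃)
    ((A ∘L B) ∘L X ∘L Ad : H₃ →ₗ[ℂ] H₃)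

theorem IsMPInv.adjoint_comp_comp_reverseOrder (hX : IsMPInv (Ad ∘L A ∘L B) X) :
    adjoint Ad ∘L Ad ∘L ((A ∘L B) ∘L X ∘L Ad) =
      adjoint ((A ∘L B) ∘L X ∘L Ad) ∘L adjoint Ad ∘L Ad :=
  calc adjoint Ad ∘L Ad ∘L ((A ∘L B) ∘L X ∘L Ad)
        = adjoint Ad ∘L adjoint ((Ad ∘L A ∘L B) ∘L X) ∘L Ad := by rw [hX.2.2.1]; rfl
    _ = adjoint (((Ad ∘L A ∘L B) ∘L X) ∘L Ad) ∘L Ad := by rw [adjoint_comp _ Ad]; rfl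
    _ = adjoint ((A ∘L B) ∘L X ∘L Ad) ∘L adjoint Ad ∘L Ad := by
      rw [← comp_assoc (adjoint _), ← adjoint_comp]; rfl

theorem IsMPInv.adjoint_comp_reverseOrder_eq_self_iff (hA : IsMPInv A Ad)
    (hX : IsMPInv (Ad ∘L A ∘L B) X) :
    adjoint ((A ∘L B) ∘L X ∘L Ad) = (A ∘L B) ∘L X ∘L Ad ↔
      (LinearMap.range ((A ∘L B) ∘L X ∘L Ad : H₃ →ₗ[ℂ] H₃)).map
          (A ∘L adjoint A : H₃ →ₗ[ℂ] H₃) =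
        LinearMap.range ((A ∘L B) ∘L X ∘L Ad : H₃ →ₗ[ℂ] H₃) := by
  set T := (A ∘L B) ∘L X ∘L Ad
  set S := adjoint Ad ∘L Ad
  set F := A ∘L adjoint A
  have hQT : (A ∘L Ad) ∘L T = T := congrArg (· ∘L B ∘L X ∘L Ad) hA.1
  have hTQ : T ∘L (A ∘L Ad) = T := congrArg ((A ∘L B) ∘L X ∘L ·) hA.2.1
  have hFS : F ∘L S = A ∘L Ad := hA.comp_adjoint_comp_adjoint_comp
  have hSF : S ∘L F = A ∘L Ad := hA.adjoint_comp_comp_comp_adjoint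
  have hST : S ∘L T = adjoint T ∘L S := hX.adjoint_comp_comp_reverseOrder
  have hFS_range : ∀ v ∈ LinearMap.range (T : H₃ →ₗ[ℂ] H₃), F (S v) = v := by
    rintro _ ⟨u, rfl⟩
    exact DFunLike.congr_fun (by rw [hFS, hQT] : (F ∘L S) ∘L T = T) u
  have hSF_range : ∀ v ∈ LinearMap.range (T : H₃ →ₗ[ℂ] H₃), S (F v) = v := by
    rintro _ ⟨u, rfl⟩
    exact DFunLike.congr_fun (by rw [hSF, hQT] : (S ∘L F) ∘L T = T) u
  constructor
  · intro hT
    rw [hT] at hST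
    have hFT : F ∘L T = T ∘L F := calc
      F ∘L T = F ∘L T ∘L S ∘L F := by rw [hSF, hTQ]
      _ = F ∘L (S ∘L T) ∘L F := by rw [hST]; rfl
      _ = ((F ∘L S) ∘L T) ∘L F := rfl
      _ = T ∘L F := by rw [hFS, hQT]
    exact Submodule.map_eq_self_of_map_le hFS_range
      (LinearMap.map_range_le_of_comp_comm (congrArg toLinearMap hFT))
      (LinearMap.map_range_le_of_comp_comm (congrArg toLinearMap hST))
  · intro h
    have hS := Submodule.map_eq_self_of_map_eq_self hSF_range h
    apply adjoint_eq_self_of_adjoint_comp_self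
    ext x
    obtain ⟨_, ⟨u, rfl⟩, hu⟩ : T x ∈ (LinearMap.range (T : H₃ →ₗ[ℂ] H₃)).map (S : H₃ →ₗ[ℂ] H₃) :=
      hS.symm ▸ ⟨x, rfl⟩
    calc adjoint T (T x) = adjoint T (S (T u)) := by rw [← hu]; rfl
      _ = S (T (T u)) := (DFunLike.congr_fun hST (T u)).symm
      _ = T x := by
        rw [← hu]; exact congrArg S (DFunLike.congr_fun (hA.comp_reverseOrder_idem hX) u)

end ReverseOrder

theorem stmt16_general {H₁ H₂ H₃ : Type*}
    [NormedAddCommGroup H₁] [InnerProductSpace ℂ H₁] [CompleteSpace H₁]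
    [NormedAddCommGroup H₂] [InnerProductSpace ℂ H₂] [CompleteSpace H₂]
    [NormedAddCommGroup H₃] [InnerProductSpace ℂ H₃] [CompleteSpace H₃]
    (A : H₂ →L[ℂ] H₃) (B : H₁ →L[ℂ] H₂)
    (Ad : H₃ →L[ℂ] H₂) (ABd : H₃ →L[ℂ] H₁)
    (hA : IsMPInv A Ad) (hAB : IsMPInv (A ∘L B) ABd)
    (X : H₂ →L[ℂ] H₁) (hX : IsMPInv (Ad ∘L A ∘L B) X) :
    ABd = X ∘L Ad ↔
      LinearMap.range ((A ∘L ContinuousLinearMap.adjoint A ∘L A ∘L B : H₁ →L[ℂ] H₃) : H₁ →ₗ[ℂ] H₃) = LinearMap.range ((A ∘L B : H₁ →L[ℂ] H₃) : H₁ →ₗ[ℂ] H₃) := by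
  calc ABd = X ∘L Ad ↔ IsMPInv (A ∘L B) (X ∘L Ad) := ⟨fun h => h ▸ hAB, hAB.unique_s16⟩
    _ ↔ adjoint ((A ∘L B) ∘L X ∘L Ad) = (A ∘L B) ∘L X ∘L Ad := hA.reverseOrder_iff hX
    _ ↔ _ := hA.adjoint_comp_reverseOrder_eq_self_iff hX
    _ ↔ _ := by rw [hA.range_comp_reverseOrder hX, ← LinearMap.range_comp]; rfl

theorem stmt16 {H₁ H₂ H₃ : Type*}
    [NormedAddCommGroup H₁] [InnerProductSpace ℂ H₁] [CompleteSpace H₁]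
    [NormedAddCommGroup H₂] [InnerProductSpace ℂ H₂] [CompleteSpace H₂]
    [NormedAddCommGroup H₃] [InnerProductSpace ℂ H₃] [CompleteSpace H₃]
    (A : H₂ →L[ℂ] H₃) (B : H₁ →L[ℂ] H₂)
    (Ad : H₃ →L[ℂ] H₂) (Bd : H₂ →L[ℂ] H₁) (ABd : H₃ →L[ℂ] H₁)
    (hAcl : IsClosed (LinearMap.range (A : H₂ →ₗ[ℂ] H₃) : Set H₃))
    (hBcl : IsClosed (LinearMap.range (B : H₁ →ₗ[ℂ] H₂) : Set H₂))
    (hABcl : IsClosed (LinearMap.range ((A ∘L B : H₁ →L[ℂ] H₃) : H₁ →ₗ[ℂ] H₃) : Set H₃))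
    (hA : IsMPInv A Ad) (hB : IsMPInv B Bd) (hAB : IsMPInv (A ∘L B) ABd)
    (X : H₂ →L[ℂ] H₁) (hX : IsMPInv (Ad ∘L A ∘L B) X) :
    ABd = X ∘L Ad ↔
      LinearMap.range ((A ∘L ContinuousLinearMap.adjoint A ∘L A ∘L B : H₁ →L[ℂ] H₃) : H₁ →ₗ[ℂ] H₃) = LinearMap.range ((A ∘L B : H₁ →L[ℂ] H₃) : H₁ →ₗ[ℂ] H₃) :=
  stmt16_general A B Ad ABd hA hAB X hX
end

section
/- Let A ∈ B(H₂, H₃) and B ∈ B(H₁, H₂) have closed ranges and suppose AB has closed range. Then (AB)† = B† A† if and only if R(A* A B B*) = R(B B* A* A). -/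
/-!
Both sides are equivalent to Greville's conditions: `P = B B†` commutes with `A* A` and
`Q = A† A` commutes with `B B*`. Passing to the adjoint pair `(B*, A*)` exchanges the two
conditions as well as the operators `A*A BB*` and `BB* A*A`, so it suffices to derive one
condition, or one range inclusion, at a time.

If `R(A*A BB*) ⊆ R(BB* A*A)`, then `R(A*A B) ⊆ R(B)`, so `P A*A P = A*A P`, and taking adjoints
shows that `P` commutes with `A*A`. Conversely, the two commutations give
`A*A BB* = BB* A*A (A† A†* B†* B† A*A BB*)`.

If `B†A†` is the Moore-Penrose inverse of `AB`, then `M = A*A P` satisfies `Q P M = M`, hence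
`M*M = M*PM`, which forces `(1 - P) M = 0`. Conversely, the commutations make `P` and `Q` commute
and `A P A†`, `B† Q B` self-adjoint: these are the Penrose equations for `B†A†`.
-/

open ContinuousLinearMap

section Hilbert

variable {E F : Type*}
  [NormedAddCommGroup E] [InnerProductSpace ℂ E] [CompleteSpace E]
  [NormedAddCommGroup F] [InnerProductSpace ℂ F] [CompleteSpace F]

theorem comp_comm_of_comp_comp_eq {P S : E →L[ℂ] E} (hP : adjoint P = P) (hS : adjoint S = S)
    (h : P ∘L S ∘L P = S ∘L P) : P ∘L S = S ∘L P := by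
  have h' := congrArg adjoint h
  simp only [adjoint_comp, hP, hS, comp_assoc] at h'
  rw [← h', h]

theorem comp_eq_self_of_adjoint_comp_eq {P : F →L[ℂ] F} {M : E →L[ℂ] F} (hP : adjoint P = P)
    (hPP : P ∘L P = P) (h : adjoint M ∘L P ∘L M = adjoint M ∘L M) : P ∘L M = M := by
  have hPM : P ∘L P ∘L M = P ∘L M := by rw [← comp_assoc, hPP]
  -- `(M - PM)* (M - PM) = M*M - M*PM`
  have : adjoint (M - P ∘L M) ∘L (M - P ∘L M) = 0 := by
    simp only [map_sub, adjoint_comp, hP, sub_comp, comp_sub, comp_assoc, hPM, h]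
    abel
  exact (sub_eq_zero.1 (adjoint_comp_self_eq_zero_iff.1 this)).symm

namespace IsMPInv

variable {A : E →L[ℂ] F} {X : F →L[ℂ] E}

theorem apply_inv_apply (h : IsMPInv A X) (x : E) : A (X (A x)) = A x :=
  DFunLike.congr_fun h.1 x

theorem inv_apply_inv (h : IsMPInv A X) (y : F) : X (A (X y)) = X y :=
  DFunLike.congr_fun h.2.1 y

theorem adjoint_inv_adjoint_apply (h : IsMPInv A X) (y : F) :
    adjoint X (adjoint A y) = A (X y) := by
  simpa only [adjoint_comp, comp_apply] using DFunLike.congr_fun h.2.2.1 y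

theorem adjoint_adjoint_inv_apply (h : IsMPInv A X) (x : E) :
    adjoint A (adjoint X x) = X (A x) := by
  simpa only [adjoint_comp, comp_apply] using DFunLike.congr_fun h.2.2.2 x

protected theorem adjoint (h : IsMPInv A X) : IsMPInv (adjoint A) (adjoint X) := by
  obtain ⟨h₁, h₂, h₃, h₄⟩ := h
  refine ⟨?_, ?_, ?_, ?_⟩
  · simp only [← adjoint_comp, comp_assoc, h₁]
  · simp only [← adjoint_comp, comp_assoc, h₂]
  · rw [← adjoint_comp, adjoint_adjoint, h₄]
  · rw [← adjoint_comp, adjoint_adjoint, h₃]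

theorem adjoint_apply_inv_apply (h : IsMPInv A X) (y : F) :
    adjoint A (A (X y)) = adjoint A y := by
  rw [← h.adjoint_inv_adjoint_apply, h.adjoint.apply_inv_apply]

theorem inv_apply_adjoint_apply (h : IsMPInv A X) (y : F) :
    X (A (adjoint A y)) = adjoint A y := by
  rw [← h.adjoint_adjoint_inv_apply, h.adjoint.apply_inv_apply]

theorem apply_adjoint_adjoint_inv_apply (h : IsMPInv A X) (x : E) :
    A (adjoint A (adjoint X x)) = A x := by
  rw [h.adjoint_adjoint_inv_apply, h.apply_inv_apply]

theorem unique_s17 (h : IsMPInv A X) {Y : F →L[ℂ] E} (hY : IsMPInv A Y) : X = Y := by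
  have hAX (y : F) : A (X y) = A (Y y) := by
    rw [← h.adjoint_inv_adjoint_apply, ← hY.adjoint_apply_inv_apply, h.adjoint_inv_adjoint_apply,
      h.apply_inv_apply]
  have hXA (x : E) : X (A x) = Y (A x) := by
    rw [← h.adjoint_adjoint_inv_apply, ← hY.inv_apply_adjoint_apply, h.adjoint_adjoint_inv_apply,
      h.apply_inv_apply]
  ext y
  rw [← h.inv_apply_inv, hAX, hXA, hY.inv_apply_inv]

theorem adjoint_comp_adjoint_inv (h : IsMPInv A X) : adjoint A ∘L adjoint X = X ∘L A := by
  rw [← adjoint_comp, h.2.2.2]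

theorem adjoint_inv_comp_adjoint (h : IsMPInv A X) : adjoint X ∘L adjoint A = A ∘L X := by
  rw [← adjoint_comp, h.2.2.1]

theorem comp_comp_eq_of_range_le (h : IsMPInv A X) {D : Type*} [NormedAddCommGroup D]
    [NormedSpace ℂ D] {T : D →L[ℂ] F}
    (hT : LinearMap.range (T : D →ₗ[ℂ] F) ≤ LinearMap.range (A : E →ₗ[ℂ] F)) :
    A ∘L X ∘L T = T := by
  ext z
  obtain ⟨x, hx⟩ := hT ⟨z, rfl⟩
  simp only [coe_coe] at hx
  simp only [comp_apply, ← hx, h.apply_inv_apply]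

end IsMPInv

end Hilbert

section Greville

variable {E F G : Type*}
  [NormedAddCommGroup E] [InnerProductSpace ℂ E] [CompleteSpace E]
  [NormedAddCommGroup F] [InnerProductSpace ℂ F] [CompleteSpace F]
  [NormedAddCommGroup G] [InnerProductSpace ℂ G] [CompleteSpace G]
  {A : F →L[ℂ] G} {B : E →L[ℂ] F} {Ad : G →L[ℂ] F} {Bd : F →L[ℂ] E}

theorem IsMPInv.adjoint_comp_comp_adjoint_inv_eq (hB : IsMPInv B Bd) {S : F →L[ℂ] F}
    (hS : S ∘L (B ∘L adjoint B) = (B ∘L adjoint B) ∘L S) :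
    adjoint B ∘L S ∘L adjoint Bd = Bd ∘L S ∘L B := by
  have hS' (y : F) : S (B (adjoint B y)) = B (adjoint B (S y)) := DFunLike.congr_fun hS y
  ext y
  simp only [comp_apply]
  rw [← hB.inv_apply_adjoint_apply, ← hS', hB.apply_adjoint_adjoint_inv_apply]

theorem IsMPInv.comp_comm_of_comp_adjoint_comm (hB : IsMPInv B Bd) {S : F →L[ℂ] F}
    (hSa : adjoint S = S) (hS : S ∘L (B ∘L adjoint B) = (B ∘L adjoint B) ∘L S) :
    (B ∘L Bd) ∘L S = S ∘L (B ∘L Bd) := by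
  have hS' (y : F) : S (B (adjoint B y)) = B (adjoint B (S y)) := DFunLike.congr_fun hS y
  refine comp_comm_of_comp_comp_eq hB.2.2.1 hSa ?_
  ext y
  simp only [comp_apply]
  rw [← hB.apply_adjoint_adjoint_inv_apply (Bd y), hS', hB.apply_inv_apply]

theorem comp_comm_of_range_le (hB : IsMPInv B Bd)
    (h : LinearMap.range ((adjoint A ∘L A ∘L B ∘L adjoint B : F →L[ℂ] F) : F →ₗ[ℂ] F) ≤
      LinearMap.range ((B ∘L adjoint B ∘L adjoint A ∘L A : F →L[ℂ] F) : F →ₗ[ℂ] F)) :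
    (B ∘L Bd) ∘L (adjoint A ∘L A) = (adjoint A ∘L A) ∘L (B ∘L Bd) := by
  have hM : adjoint A ∘L A ∘L B = (adjoint A ∘L A ∘L B ∘L adjoint B) ∘L adjoint Bd := by
    ext x
    simp only [comp_apply, hB.apply_adjoint_adjoint_inv_apply]
  have hrange : LinearMap.range ((adjoint A ∘L A ∘L B : E →L[ℂ] F) : E →ₗ[ℂ] F) ≤
      LinearMap.range (B : E →ₗ[ℂ] F) :=
    calc _ = LinearMap.range
          (((adjoint A ∘L A ∘L B ∘L adjoint B) ∘L adjoint Bd : E →L[ℂ] F) : E →ₗ[ℂ] F) := by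
          rw [hM]
      _ ≤ _ := LinearMap.range_comp_le_range _ _
      _ ≤ _ := h
      _ ≤ _ := LinearMap.range_comp_le_range _ _
  have hfix := hB.comp_comp_eq_of_range_le hrange
  refine comp_comm_of_comp_comp_eq hB.2.2.1 (by rw [adjoint_comp, adjoint_adjoint]) ?_
  ext y
  exact DFunLike.congr_fun hfix (Bd y)

theorem range_le_of_comp_comm (hA : IsMPInv A Ad) (hB : IsMPInv B Bd)
    (hP : (B ∘L Bd) ∘L (adjoint A ∘L A) = (adjoint A ∘L A) ∘L (B ∘L Bd))
    (hQ : (Ad ∘L A) ∘L (B ∘L adjoint B) = (B ∘L adjoint B) ∘L (Ad ∘L A)) :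
    LinearMap.range ((adjoint A ∘L A ∘L B ∘L adjoint B : F →L[ℂ] F) : F →ₗ[ℂ] F) ≤
      LinearMap.range ((B ∘L adjoint B ∘L adjoint A ∘L A : F →L[ℂ] F) : F →ₗ[ℂ] F) := by
  have hP' (y : F) : B (Bd (adjoint A (A y))) = adjoint A (A (B (Bd y))) :=
    DFunLike.congr_fun hP y
  have hQ' (y : F) : Ad (A (B (adjoint B y))) = B (adjoint B (Ad (A y))) :=
    DFunLike.congr_fun hQ y
  have hM : adjoint A ∘L A ∘L B ∘L adjoint B = (B ∘L adjoint B ∘L adjoint A ∘L A) ∘L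
      (Ad ∘L adjoint Ad ∘L adjoint Bd ∘L Bd ∘L adjoint A ∘L A ∘L B ∘L adjoint B) := by
    ext x
    simp only [comp_apply]
    rw [hA.adjoint_apply_inv_apply, hA.adjoint_adjoint_inv_apply, ← hQ',
      hB.apply_adjoint_adjoint_inv_apply, hP', hB.apply_inv_apply, hA.inv_apply_adjoint_apply]
  rw [hM]
  exact LinearMap.range_comp_le_range _ _

theorem range_eq_iff_comp_comm (hA : IsMPInv A Ad) (hB : IsMPInv B Bd) :
    LinearMap.range ((adjoint A ∘L A ∘L B ∘L adjoint B : F →L[ℂ] F) : F →ₗ[ℂ] F) =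
        LinearMap.range ((B ∘L adjoint B ∘L adjoint A ∘L A : F →L[ℂ] F) : F →ₗ[ℂ] F) ↔
      (B ∘L Bd) ∘L (adjoint A ∘L A) = (adjoint A ∘L A) ∘L (B ∘L Bd) ∧
        (Ad ∘L A) ∘L (B ∘L adjoint B) = (B ∘L adjoint B) ∘L (Ad ∘L A) := by
  constructor
  · intro h
    refine ⟨comp_comm_of_range_le hB h.le, ?_⟩
    simpa only [adjoint_adjoint, hA.adjoint_comp_adjoint_inv] using
      comp_comm_of_range_le (A := adjoint B) hA.adjoint (by simpa only [adjoint_adjoint] using h.ge)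
  · rintro ⟨hP, hQ⟩
    refine le_antisymm (range_le_of_comp_comm hA hB hP hQ) ?_
    simpa only [adjoint_adjoint] using range_le_of_comp_comm hB.adjoint hA.adjoint
      (by simpa only [adjoint_adjoint, hA.adjoint_comp_adjoint_inv] using hQ)
      (by simpa only [adjoint_adjoint, hB.adjoint_inv_comp_adjoint] using hP)

theorem comp_comm_of_isMPInv_comp (hA : IsMPInv A Ad) (hB : IsMPInv B Bd)
    (hX : IsMPInv (A ∘L B) (Bd ∘L Ad)) :
    (B ∘L Bd) ∘L (adjoint A ∘L A) = (adjoint A ∘L A) ∘L (B ∘L Bd) := by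
  have hT (x : E) : A (B (Bd (Ad (A (B x))))) = A (B x) := hX.apply_inv_apply x
  have hTX (y : G) : adjoint A (A (B (Bd (Ad y)))) = Ad (A (B (Bd (adjoint A y)))) := by
    have := hX.adjoint_inv_adjoint_apply y
    simp only [adjoint_comp, comp_apply] at this
    rw [← this, hA.adjoint_adjoint_inv_apply, hB.adjoint_inv_adjoint_apply]
  have hQPM (x : F) : Ad (A (B (Bd (adjoint A (A (B (Bd x))))))) = adjoint A (A (B (Bd x))) := by
    rw [← hTX, hT]
  have hPP : (B ∘L Bd) ∘L (B ∘L Bd) = B ∘L Bd := by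
    ext x
    exact hB.apply_inv_apply (Bd x)
  have hPM : (B ∘L Bd) ∘L (adjoint A ∘L A) ∘L (B ∘L Bd) = (adjoint A ∘L A) ∘L (B ∘L Bd) := by
    refine comp_eq_self_of_adjoint_comp_eq hB.2.2.1 hPP ?_
    ext x
    simp only [comp_apply, adjoint_comp, adjoint_adjoint, hB.adjoint_inv_adjoint_apply]
    conv_rhs => rw [← hQPM x, hA.apply_inv_apply]
  exact comp_comm_of_comp_comp_eq hB.2.2.1 (by rw [adjoint_comp, adjoint_adjoint]) hPM

theorem isMPInv_comp_of_comp_comm (hA : IsMPInv A Ad) (hB : IsMPInv B Bd)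
    (hP : (B ∘L Bd) ∘L (adjoint A ∘L A) = (adjoint A ∘L A) ∘L (B ∘L Bd))
    (hQ : (Ad ∘L A) ∘L (B ∘L adjoint B) = (B ∘L adjoint B) ∘L (Ad ∘L A)) :
    IsMPInv (A ∘L B) (Bd ∘L Ad) := by
  have hPQ (y : F) : B (Bd (Ad (A y))) = Ad (A (B (Bd y))) :=
    DFunLike.congr_fun (hB.comp_comm_of_comp_adjoint_comm hA.2.2.2 hQ) y
  have hTX : A ∘L (B ∘L Bd) ∘L Ad = adjoint Ad ∘L (B ∘L Bd) ∘L adjoint A := by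
    simpa only [adjoint_adjoint] using
      hA.adjoint.adjoint_comp_comp_adjoint_inv_eq (S := B ∘L Bd)
        (by simpa only [adjoint_adjoint] using hP)
  have hXT := hB.adjoint_comp_comp_adjoint_inv_eq hQ
  refine ⟨?_, ?_, ?_, ?_⟩
  · ext x
    simp only [comp_apply]
    rw [hPQ, hA.apply_inv_apply, hB.apply_inv_apply]
  · ext y
    simp only [comp_apply]
    rw [← hPQ, hB.inv_apply_inv, hA.inv_apply_inv]
  · ext y
    simp only [adjoint_comp, comp_apply, hB.adjoint_inv_adjoint_apply]
    exact (DFunLike.congr_fun hTX y).symm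
  · ext x
    simp only [adjoint_comp, comp_apply, hA.adjoint_adjoint_inv_apply]
    exact DFunLike.congr_fun hXT x

theorem isMPInv_comp_iff_comp_comm (hA : IsMPInv A Ad) (hB : IsMPInv B Bd) :
    IsMPInv (A ∘L B) (Bd ∘L Ad) ↔
      (B ∘L Bd) ∘L (adjoint A ∘L A) = (adjoint A ∘L A) ∘L (B ∘L Bd) ∧
        (Ad ∘L A) ∘L (B ∘L adjoint B) = (B ∘L adjoint B) ∘L (Ad ∘L A) := by
  refine ⟨fun hX => ⟨comp_comm_of_isMPInv_comp hA hB hX, ?_⟩,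
    fun h => isMPInv_comp_of_comp_comm hA hB h.1 h.2⟩
  have hX' : IsMPInv (adjoint B ∘L adjoint A) (adjoint Ad ∘L adjoint Bd) := by
    simpa only [adjoint_comp] using hX.adjoint
  simpa only [adjoint_adjoint, hA.adjoint_comp_adjoint_inv] using
    comp_comm_of_isMPInv_comp hB.adjoint hA.adjoint hX'

end Greville

theorem stmt17_general {H₁ H₂ H₃ : Type*}
    [NormedAddCommGroup H₁] [InnerProductSpace ℂ H₁] [CompleteSpace H₁]
    [NormedAddCommGroup H₂] [InnerProductSpace ℂ H₂] [CompleteSpace H₂]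
    [NormedAddCommGroup H₃] [InnerProductSpace ℂ H₃] [CompleteSpace H₃]
    (A : H₂ →L[ℂ] H₃) (B : H₁ →L[ℂ] H₂)
    (Ad : H₃ →L[ℂ] H₂) (Bd : H₂ →L[ℂ] H₁) (ABd : H₃ →L[ℂ] H₁)
    (hA : IsMPInv A Ad) (hB : IsMPInv B Bd) (hAB : IsMPInv (A ∘L B) ABd) :
    ABd = Bd ∘L Ad ↔
      LinearMap.range ((ContinuousLinearMap.adjoint A ∘L A ∘L B ∘L ContinuousLinearMap.adjoint B : H₂ →L[ℂ] H₂) : H₂ →ₗ[ℂ] H₂) =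
        LinearMap.range ((B ∘L ContinuousLinearMap.adjoint B ∘L ContinuousLinearMap.adjoint A ∘L A : H₂ →L[ℂ] H₂) : H₂ →ₗ[ℂ] H₂) := by
  have hinv : ABd = Bd ∘L Ad ↔ IsMPInv (A ∘L B) (Bd ∘L Ad) :=
    ⟨fun h => h ▸ hAB, hAB.unique_s17⟩
  rw [hinv, isMPInv_comp_iff_comp_comm hA hB, range_eq_iff_comp_comm hA hB]

theorem stmt17 {H₁ H₂ H₃ : Type*}
    [NormedAddCommGroup H₁] [InnerProductSpace ℂ H₁] [CompleteSpace H₁]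
    [NormedAddCommGroup H₂] [InnerProductSpace ℂ H₂] [CompleteSpace H₂]
    [NormedAddCommGroup H₃] [InnerProductSpace ℂ H₃] [CompleteSpace H₃]
    (A : H₂ →L[ℂ] H₃) (B : H₁ →L[ℂ] H₂)
    (Ad : H₃ →L[ℂ] H₂) (Bd : H₂ →L[ℂ] H₁) (ABd : H₃ →L[ℂ] H₁)
    (hAcl : IsClosed (LinearMap.range (A : H₂ →ₗ[ℂ] H₃) : Set H₃))
    (hBcl : IsClosed (LinearMap.range (B : H₁ →ₗ[ℂ] H₂) : Set H₂))
    (hABcl : IsClosed (LinearMap.range ((A ∘L B : H₁ →L[ℂ] H₃) : H₁ →ₗ[ℂ] H₃) : Set H₃))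
    (hA : IsMPInv A Ad) (hB : IsMPInv B Bd) (hAB : IsMPInv (A ∘L B) ABd) :
    ABd = Bd ∘L Ad ↔
      LinearMap.range ((ContinuousLinearMap.adjoint A ∘L A ∘L B ∘L ContinuousLinearMap.adjoint B : H₂ →L[ℂ] H₂) : H₂ →ₗ[ℂ] H₂) =
        LinearMap.range ((B ∘L ContinuousLinearMap.adjoint B ∘L ContinuousLinearMap.adjoint A ∘L A : H₂ →L[ℂ] H₂) : H₂ →ₗ[ℂ] H₂) :=
  stmt17_general A B Ad Bd ABd hA hB hAB
end
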